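/- arXiv:1109.6453 — 6 statements merged into one kernel-verified Lean document; each statement's English description precedes it below -/
import Mathlib

section
/- Let (X_t)_{t∈ℤ⁺} be adapted to (F_t) with increments Δ_t = X_{t+1} − X_t. Suppose there exist α > 0, c > 0 and x₀ < ∞ such that P[Δ_t⁺ > x | F_t] ≥ c x^{−α} almost surely for all x ≥ x₀ and all t. Then for any ε > 0, almost surely, max_{0 ≤ s ≤ t} Δ_s⁺ ≥ t^{1/α} (log t)^{−(1/α)−ε} for all but finitely many t. -/
/-!
Put `b_t = t^{1/α} (log t)^{-1/α-ε}`. By the tail hypothesis each increment exceeds `b_t`, given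
the past, with probability at least `δ_t = c b_t^{-α} = c (log t)^{1+αε} / t`. Conditioning one
step at a time, none of `Δ_0, …, Δ_t` exceeds `b_t` with probability at most
`(1 - δ_t)^{t+1} ≤ exp (-c (log t)^{1+αε}) ≤ t^{-2}` for large `t`, because `αε > 0`.
These bounds are summable, so Borel–Cantelli concludes.
-/

open MeasureTheory Filter Real Topology

theorem ae_eventually_notMem_of_measureReal_le {α : Type*} {m : MeasurableSpace α}
    {μ : Measure α} [IsFiniteMeasure μ] {s : ℕ → Set α} {f : ℕ → ℝ} (hf : Summable f)
    (hs : ∀ᶠ n in atTop, μ.real (s n) ≤ f n) :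
    ∀ᵐ x ∂μ, ∀ᶠ n in atTop, x ∉ s n := by
  have hsum : Summable fun n => μ.real (s n) :=
    hf.of_norm_bounded_eventually_nat <| by
      filter_upwards [hs] with n hn
      rwa [Real.norm_of_nonneg measureReal_nonneg]
  refine ae_eventually_notMem ?_
  have h : (∑' n, μ (s n)) = ENNReal.ofReal (∑' n, μ.real (s n)) := by
    rw [ENNReal.ofReal_tsum_of_nonneg (fun _ => measureReal_nonneg) hsum]
    exact tsum_congr fun n => (ofReal_measureReal (measure_ne_top μ _)).symm
  exact h ▸ ENNReal.ofReal_ne_top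

theorem measureReal_diff_le_of_condExp_indicator_ge {Ω : Type*} {m m0 : MeasurableSpace Ω}
    {μ : Measure Ω} [IsFiniteMeasure μ] (hm : m ≤ m0) {A B : Set Ω} (hA : MeasurableSet[m] A)
    (hB : MeasurableSet B) {δ : ℝ}
    (hδ : ∀ᵐ ω ∂μ, δ ≤ μ[B.indicator (fun _ => (1:ℝ)) | m] ω) :
    μ.real (A \ B) ≤ (1 - δ) * μ.real A := by
  have hint : Integrable (B.indicator fun _ => (1:ℝ)) μ := (integrable_const 1).indicator hB
  have hhit : δ * μ.real A ≤ μ.real (A ∩ B) :=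
    calc δ * μ.real A = ∫ _ in A, δ ∂μ := by rw [setIntegral_const, smul_eq_mul, mul_comm]
      _ ≤ ∫ ω in A, μ[B.indicator (fun _ => (1:ℝ)) | m] ω ∂μ :=
        setIntegral_mono_ae (integrable_const δ).integrableOn integrable_condExp.integrableOn hδ
      _ = ∫ ω in A, B.indicator (fun _ => (1:ℝ)) ω ∂μ := setIntegral_condExp hm hint hA
      _ = μ.real (A ∩ B) := by
        rw [setIntegral_indicator hB, setIntegral_const, smul_eq_mul, mul_one]
  linarith [measureReal_inter_add_sdiff (μ := μ) (s := A) hB]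

theorem measureReal_forall_notMem_le_one_sub_pow {Ω : Type*} {m0 : MeasurableSpace Ω}
    {μ : Measure Ω} [IsProbabilityMeasure μ] (F : Filtration ℕ m0) {B : ℕ → Set Ω}
    (hB : ∀ s, MeasurableSet[F (s + 1)] (B s)) {δ : ℝ} (hδ : δ ≤ 1)
    (hcond : ∀ s, ∀ᵐ ω ∂μ, δ ≤ μ[(B s).indicator (fun _ => (1:ℝ)) | F s] ω)
    (n : ℕ) :
    μ.real {ω | ∀ s < n, ω ∉ B s} ≤ (1 - δ) ^ n := by
  induction n with
  | zero => simp
  | succ n ih =>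
    have hA : MeasurableSet[F n] {ω | ∀ s < n, ω ∉ B s} := by
      simp only [Set.ofPred_forall]
      exact .iInter fun s => .iInter fun hs => (F.mono hs _ (hB s)).compl
    have hsplit : {ω | ∀ s < n + 1, ω ∉ B s} = {ω | ∀ s < n, ω ∉ B s} \ B n := by
      ext ω
      simp only [Set.mem_ofPred_eq, Set.mem_sdiff, Nat.forall_lt_succ_right]
    calc μ.real {ω | ∀ s < n + 1, ω ∉ B s}
        ≤ (1 - δ) * μ.real {ω | ∀ s < n, ω ∉ B s} := by
          rw [hsplit]
          exact measureReal_diff_le_of_condExp_indicator_ge (F.le n) hA (F.le _ _ (hB n)) (hcond n)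
      _ ≤ (1 - δ) * (1 - δ) ^ n := mul_le_mul_of_nonneg_left ih (by linarith)
      _ = (1 - δ) ^ (n + 1) := by ring

theorem measurableSet_lt_posPart_increment {Ω : Type*} {m0 : MeasurableSpace Ω}
    {F : Filtration ℕ m0} {X : ℕ → Ω → ℝ} (hX : Adapted F X) (x : ℝ) (s : ℕ) :
    MeasurableSet[F (s + 1)] {ω | x < max (X (s + 1) ω - X s ω) 0} :=
  measurableSet_lt measurable_const
    (((hX (s + 1)).sub ((hX s).mono (F.mono s.le_succ) le_rfl)).max measurable_const)

theorem rpow_one_div_mul_log_rpow_rpow_neg {α ε x : ℝ} (hα : α ≠ 0) (hx : 1 ≤ x) :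
    (x ^ (1 / α) * log x ^ (-(1 / α) - ε)) ^ (-α) = log x ^ (1 + α * ε) / x := by
  have hlog : 0 ≤ log x := log_nonneg hx
  rw [mul_rpow (by positivity) (by positivity), ← rpow_mul (by linarith), ← rpow_mul hlog,
    show 1 / α * -α = -1 by field_simp,
    show (-(1 / α) - ε) * -α = 1 + α * ε by field_simp; ring,
    rpow_neg_one, div_eq_inv_mul]

theorem tendsto_log_rpow_div_atTop (κ : ℝ) :
    Tendsto (fun x => log x ^ κ / x) atTop (𝓝 0) := by
  simpa using (isLittleO_log_rpow_rpow_atTop κ one_pos).tendsto_div_nhds_zero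

theorem tendsto_rpow_one_div_mul_log_rpow_atTop {α : ℝ} (hα : 0 < α) (ε : ℝ) :
    Tendsto (fun x => x ^ (1 / α) * log x ^ (-(1 / α) - ε)) atTop atTop := by
  have hu : Tendsto (fun x => log x ^ (1 + α * ε) / x) atTop (𝓝[>] 0) := by
    refine tendsto_nhdsWithin_iff.2 ⟨tendsto_log_rpow_div_atTop _, ?_⟩
    filter_upwards [eventually_gt_atTop 1] with x hx
    exact div_pos (rpow_pos_of_pos (log_pos hx) _) (by linarith)
  refine ((tendsto_rpow_neg_nhdsGT_zero (y := -(1 / α)) (by simpa using hα)).comp hu).congr' ?_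
  filter_upwards [eventually_ge_atTop 1] with x hx
  rw [Function.comp_apply, ← rpow_one_div_mul_log_rpow_rpow_neg hα.ne' hx,
    ← rpow_mul (by have := log_nonneg hx; positivity), show -α * -(1 / α) = 1 by field_simp,
    rpow_one]

theorem eventually_mul_log_rpow_le (c κ : ℝ) :
    ∀ᶠ n : ℕ in atTop, c * log n ^ κ ≤ n := by
  have h := ((tendsto_log_rpow_div_atTop κ).const_mul c).comp tendsto_natCast_atTop_atTop
  rw [mul_zero] at h
  filter_upwards [h.eventually_le_const one_pos, eventually_gt_atTop 0] with n hn hn0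
  have hn0' : (0 : ℝ) < n := by exact_mod_cast hn0
  simp only [Function.comp_apply, ← mul_div_assoc] at hn
  rwa [div_le_one hn0'] at hn

theorem eventually_one_sub_mul_log_rpow_div_pow_le {c κ : ℝ} (hc : 0 < c) (hκ : 1 < κ) :
    ∀ᶠ n : ℕ in atTop, (1 - c * log n ^ κ / n) ^ (n + 1) ≤ (n : ℝ) ^ (-2 : ℝ) := by
  have hlarge : ∀ᶠ n : ℕ in atTop, 2 ≤ c * log n ^ (κ - 1) :=
    ((((tendsto_rpow_atTop (sub_pos.2 hκ)).comp tendsto_log_atTop).const_mul_atTop hc).comp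
      tendsto_natCast_atTop_atTop).eventually_ge_atTop 2
  filter_upwards [hlarge, eventually_mul_log_rpow_le c κ, eventually_gt_atTop 1]
    with n htwo hle hn
  have hn1 : (1 : ℝ) < n := by exact_mod_cast hn
  have hlog : 0 < log n := log_pos hn1
  set t := c * log n ^ κ
  have ht : 2 * log n ≤ t := by
    calc 2 * log n ≤ c * log n ^ (κ - 1) * log n := mul_le_mul_of_nonneg_right htwo hlog.le
      _ = t := by rw [mul_assoc, ← rpow_add_one hlog.ne', sub_add_cancel]
  have hδ : 0 ≤ t / n := by positivity
  calc (1 - t / n) ^ (n + 1) ≤ (1 - t / n) ^ n :=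
        pow_le_pow_of_le_one (by rw [sub_nonneg, div_le_one (by linarith)]; exact hle)
          (by linarith) (Nat.le_succ n)
    _ ≤ exp (-t) := one_sub_div_pow_le_exp_neg hle
    _ ≤ exp (-(2 * log n)) := by gcongr
    _ = (n : ℝ) ^ (-2 : ℝ) := by rw [rpow_def_of_pos (by linarith)]; ring_nf

/-- Almost-sure eventual lower bound on the running maximum of the positive parts
of the increments: for any `ε > 0`, a.s. for all but finitely many `t`,
`max_{0 ≤ s ≤ t} Δ_s⁺ ≥ t^{1/α} (log t)^{-(1/α)-ε}`. -/
theorem stmt4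
    {Ω : Type*} {m0 : MeasurableSpace Ω} {μ : Measure Ω} [IsProbabilityMeasure μ]
    (F : Filtration ℕ m0) (X : ℕ → Ω → ℝ) (hadapted : Adapted F X)
    (α c x₀ : ℝ) (hα : 0 < α) (hc : 0 < c)
    (htail : ∀ t, ∀ x, x₀ ≤ x → ∀ᵐ ω ∂μ,
      c * x ^ (-α) ≤ (μ[Set.indicator {ω' | x < max (X (t + 1) ω' - X t ω') 0}
        (fun _ => (1:ℝ))|F t]) ω)
    (ε : ℝ) (hε : 0 < ε) :
    ∀ᵐ ω ∂μ, ∀ᶠ t : ℕ in atTop,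
      ∃ s ≤ t, (t:ℝ) ^ (1/α) * (Real.log t) ^ (-(1/α) - ε)
        ≤ max (X (s + 1) ω - X s ω) 0 := by
  set b : ℕ → ℝ := fun t => (t:ℝ) ^ (1/α) * Real.log t ^ (-(1/α) - ε)
  have hδ : ∀ᶠ t : ℕ in atTop, c * b t ^ (-α) = c * log t ^ (1 + α * ε) / t := by
    filter_upwards [eventually_ge_atTop 1] with t ht
    rw [rpow_one_div_mul_log_rpow_rpow_neg hα.ne' (by exact_mod_cast ht), mul_div_assoc]
  have hmiss : ∀ᶠ t : ℕ in atTop,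
      μ.real {ω | ∀ s < t + 1, ω ∉ {ω | b t < max (X (s + 1) ω - X s ω) 0}}
        ≤ (t : ℝ) ^ (-2 : ℝ) := by
    filter_upwards [hδ, eventually_gt_atTop 0, eventually_mul_log_rpow_le c (1 + α * ε),
      eventually_one_sub_mul_log_rpow_div_pow_le hc (by nlinarith : 1 < 1 + α * ε),
      ((tendsto_rpow_one_div_mul_log_rpow_atTop hα ε).comp
        tendsto_natCast_atTop_atTop).eventually_ge_atTop x₀]
      with t hδt ht hle hdecay hx₀
    have hδ1 : c * b t ^ (-α) ≤ 1 := by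
      rwa [hδt, div_le_one (by exact_mod_cast ht)]
    calc _ ≤ (1 - c * b t ^ (-α)) ^ (t + 1) :=
          measureReal_forall_notMem_le_one_sub_pow F
            (measurableSet_lt_posPart_increment hadapted (b t)) hδ1
            (fun s => htail s (b t) hx₀) (t + 1)
      _ ≤ (t : ℝ) ^ (-2 : ℝ) := by rwa [hδt]
  filter_upwards [ae_eventually_notMem_of_measureReal_le
    (Real.summable_nat_rpow.2 (by norm_num)) hmiss] with ω hω
  filter_upwards [hω] with t ht
  simp only [not_forall, not_not, Nat.lt_succ_iff] at ht
  obtain ⟨s, hs, hlt⟩ := ht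
  exact ⟨s, hs, hlt.le⟩
end

section
/- Let (X_t)_{t∈ℤ⁺} be adapted to (F_t), X_0 = 0, with increments Δ_t = X_{t+1} − X_t. Let h : [0,∞) → [0,∞) be increasing and concave, and suppose there exists C < ∞ with E[h(Δ_t⁺) | F_t] ≤ C a.s. for all t. Then for any ε > 0, almost surely, for all but finitely many t, X_t ≤ Σ_{s=0}^{t−1} Δ_s⁺ ≤ h^{−1}(t (log t)^{1+ε}). -/
open MeasureTheory Filter

/-!
Write `Z_s = h(Δ_s⁺)`. Concavity with `h 0 ≥ 0` makes `h` subadditive on `[0, ∞)`, so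
`h(Σ_{s<t} Δ_s⁺) ≤ Σ_{s<t} Z_s`, and the conditional bound gives `E Z_s ≤ C`. By Markov's
inequality the dyadic partial sums satisfy `P(Σ_{s<2^(k+1)} Z_s ≥ 2^k (k log 2)^(1+ε)) ≤
2C / (k log 2)^(1+ε)`, which is summable, so by Borel–Cantelli almost surely only finitely many of
these events occur; monotonicity of the partial sums interpolates between dyadic times.
-/

namespace ConcaveOn

variable {h : ℝ → ℝ}

theorem mul_le_map_mul (hconc : ConcaveOn ℝ (Set.Ici 0) h) (hh0 : 0 ≤ h 0) {θ x : ℝ}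
    (hθ₀ : 0 ≤ θ) (hθ₁ : θ ≤ 1) (hx : 0 ≤ x) : θ * h x ≤ h (θ * x) := by
  have := hconc.2 Set.self_mem_Ici (Set.mem_Ici.2 hx) (sub_nonneg.2 hθ₁) hθ₀ (by ring)
  simp only [smul_eq_mul, mul_zero, zero_add] at this
  nlinarith [mul_nonneg (sub_nonneg.2 hθ₁) hh0]

theorem map_add_le (hconc : ConcaveOn ℝ (Set.Ici 0) h) (hh0 : 0 ≤ h 0) {a b : ℝ}
    (ha : 0 ≤ a) (hb : 0 ≤ b) : h (a + b) ≤ h a + h b := by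
  rcases (add_nonneg ha hb).eq_or_lt with hab | hab
  · obtain ⟨rfl, rfl⟩ : a = 0 ∧ b = 0 := ⟨by linarith, by linarith⟩
    simpa using hh0
  have hθ : a / (a + b) + b / (a + b) = 1 := by field_simp
  have hA := hconc.mul_le_map_mul hh0 (θ := a / (a + b)) (by positivity)
    (by linarith [div_nonneg hb hab.le]) hab.le
  have hB := hconc.mul_le_map_mul hh0 (θ := b / (a + b)) (by positivity)
    (by linarith [div_nonneg ha hab.le]) hab.le
  rw [div_mul_cancel₀ _ hab.ne'] at hA hB
  linear_combination hA + hB - h (a + b) * hθ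

theorem map_sum_le (hconc : ConcaveOn ℝ (Set.Ici 0) h) (hh0 : 0 ≤ h 0) {ι : Type*}
    {s : Finset ι} (hs : s.Nonempty) {g : ι → ℝ} (hg : ∀ i ∈ s, 0 ≤ g i) :
    h (∑ i ∈ s, g i) ≤ ∑ i ∈ s, h (g i) :=
  Finset.le_sum_nonempty_of_subadditive_on_pred h (0 ≤ ·)
    (fun _ _ => hconc.map_add_le hh0) (fun _ _ => add_nonneg) g s hs hg

end ConcaveOn

theorem eventually_le_of_eventually_le_two_pow {S φ : ℕ → ℝ} (hS : Monotone S)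
    (hφ : Monotone φ) (h : ∀ᶠ k in atTop, S (2 ^ (k + 1)) ≤ φ (2 ^ k)) :
    ∀ᶠ t in atTop, S t ≤ φ t := by
  obtain ⟨K, hK⟩ := eventually_atTop.1 h
  filter_upwards [eventually_ge_atTop (2 ^ K)] with t ht
  have ht0 : t ≠ 0 := Nat.one_le_iff_ne_zero.1 (Nat.one_le_two_pow.trans ht)
  calc S t ≤ S (2 ^ (Nat.log 2 t + 1)) := hS (Nat.lt_pow_succ_log_self one_lt_two t).le
    _ ≤ φ (2 ^ Nat.log 2 t) := hK _ ((Nat.le_log_iff_pow_le one_lt_two ht0).2 ht)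
    _ ≤ φ t := hφ (Nat.pow_log_le_self 2 ht0)

theorem monotone_natCast_mul_log_rpow {p : ℝ} (hp : 0 ≤ p) :
    Monotone fun t : ℕ => (t : ℝ) * Real.log t ^ p := by
  intro t t' htt'
  rcases Nat.eq_zero_or_pos t with rfl | ht
  · simp only [CharP.cast_eq_zero, zero_mul]
    exact mul_nonneg t'.cast_nonneg (Real.rpow_nonneg (Real.log_natCast_nonneg t') p)
  have hcast : (t : ℝ) ≤ t' := by exact_mod_cast htt'
  exact mul_le_mul hcast
    (Real.rpow_le_rpow (Real.log_natCast_nonneg t)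
      (Real.log_le_log (by exact_mod_cast ht) hcast) hp)
    (Real.rpow_nonneg (Real.log_natCast_nonneg t) p) t'.cast_nonneg

theorem summable_two_pow_succ_mul_div_two_pow_mul_log_rpow (C : ℝ) {p : ℝ} (hp : 1 < p) :
    Summable fun k : ℕ => ((2 ^ (k + 1) : ℕ) * C) / (2 ^ k * (k * Real.log 2) ^ p) := by
  refine ((Real.summable_one_div_nat_rpow.2 hp).mul_left (2 * C / Real.log 2 ^ p)).congr
    fun k => ?_
  have hlog2 : 0 < Real.log 2 := Real.log_pos one_lt_two
  rw [Real.mul_rpow k.cast_nonneg hlog2.le]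
  rcases Nat.eq_zero_or_pos k with rfl | hk
  · simp [Real.zero_rpow (by linarith : p ≠ 0)]
  · have : (0 : ℝ) < k := by exact_mod_cast hk
    field_simp
    push_cast
    ring

namespace MeasureTheory

variable {Ω : Type*} {m0 : MeasurableSpace Ω} {μ : Measure Ω}

theorem integral_le_of_ae_condExp_le [IsProbabilityMeasure μ] {m : MeasurableSpace Ω}
    (hm : m ≤ m0) {f : Ω → ℝ} {C : ℝ} (hf : ∀ᵐ ω ∂μ, μ[f|m] ω ≤ C) : ∫ ω, f ω ∂μ ≤ C := by
  rw [← integral_condExp hm]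
  simpa using integral_mono_ae integrable_condExp (integrable_const C) hf

theorem ae_eventually_lt_of_summable_integral_div [IsFiniteMeasure μ] {Y : ℕ → Ω → ℝ}
    {a : ℕ → ℝ} (hY : ∀ k, 0 ≤ᵐ[μ] Y k) (hint : ∀ k, Integrable (Y k) μ)
    (ha : ∀ᶠ k in atTop, 0 < a k) (hsum : Summable fun k => (∫ ω, Y k ω ∂μ) / a k) :
    ∀ᵐ ω ∂μ, ∀ᶠ k in atTop, Y k ω < a k := by
  set A : ℕ → Set Ω := fun k => {ω | 0 < a k ∧ a k ≤ Y k ω}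
  have hA : ∀ k, μ (A k) ≤ ENNReal.ofReal ((∫ ω, Y k ω ∂μ) / a k) := by
    intro k
    by_cases hak : 0 < a k
    · have hmarkov := mul_meas_ge_le_integral_of_nonneg (hY k) (hint k) (a k)
      have hAk : A k = {ω | a k ≤ Y k ω} := by simp [A, hak]
      rw [hAk, ← ofReal_measureReal]
      exact ENNReal.ofReal_le_ofReal ((le_div_iff₀' hak).2 hmarkov)
    · simp [A, hak]
  have hA_sum : ∑' k, μ (A k) ≠ ⊤ :=
    ne_top_of_le_ne_top hsum.tsum_ofReal_ne_top (ENNReal.tsum_le_tsum hA)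
  filter_upwards [ae_eventually_notMem hA_sum] with ω hω
  filter_upwards [hω, ha] with k hωk hak
  exact lt_of_not_ge fun hle => hωk ⟨hak, hle⟩

theorem ae_eventually_sum_range_le_mul_log_rpow [IsFiniteMeasure μ] {Z : ℕ → Ω → ℝ} {C ε : ℝ}
    (hZ : ∀ s, 0 ≤ Z s) (hint : ∀ s, Integrable (Z s) μ) (hC : ∀ s, ∫ ω, Z s ω ∂μ ≤ C)
    (hε : 0 < ε) :
    ∀ᵐ ω ∂μ, ∀ᶠ t : ℕ in atTop, ∑ s ∈ Finset.range t, Z s ω ≤ t * Real.log t ^ (1 + ε) := by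
  set φ : ℕ → ℝ := fun t => t * Real.log t ^ (1 + ε)
  have hφ_two_pow : ∀ k : ℕ, φ (2 ^ k) = 2 ^ k * (k * Real.log 2) ^ (1 + ε) := by
    simp [φ, Real.log_pow]
  have hφ_nonneg : ∀ k : ℕ, 0 ≤ φ (2 ^ k) := fun k => by
    rw [hφ_two_pow]; positivity
  have hφ_pos : ∀ᶠ k in atTop, 0 < φ (2 ^ k) := by
    filter_upwards [eventually_ge_atTop 1] with k hk
    rw [hφ_two_pow]
    have : (0 : ℝ) < k := by exact_mod_cast hk
    positivity
  have hsum_nonneg : ∀ n ω, 0 ≤ ∑ s ∈ Finset.range n, Z s ω :=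
    fun n ω => Finset.sum_nonneg fun s _ => hZ s ω
  have hmean_sum : ∀ n, ∫ ω, ∑ s ∈ Finset.range n, Z s ω ∂μ ≤ n * C := fun n => by
    rw [integral_finsetSum _ fun s _ => hint s]
    simpa using Finset.sum_le_card_nsmul (Finset.range n) _ _ fun s _ => hC s
  have hsummable : Summable fun k =>
      (∫ ω, ∑ s ∈ Finset.range (2 ^ (k + 1)), Z s ω ∂μ) / φ (2 ^ k) := by
    refine (summable_two_pow_succ_mul_div_two_pow_mul_log_rpow C
      (by linarith : 1 < 1 + ε)).of_nonneg_of_le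
      (fun k => div_nonneg (integral_nonneg (hsum_nonneg _)) (hφ_nonneg k)) fun k => ?_
    rw [← hφ_two_pow]
    exact div_le_div_of_nonneg_right (hmean_sum _) (hφ_nonneg k)
  filter_upwards [ae_eventually_lt_of_summable_integral_div
    (fun k => Eventually.of_forall (hsum_nonneg _))
    (fun k => integrable_finsetSum _ fun s _ => hint s) hφ_pos hsummable] with ω hω
  exact eventually_le_of_eventually_le_two_pow
    ((Finset.sum_mono_set_of_nonneg fun s => hZ s ω).comp Finset.range_mono)
    (monotone_natCast_mul_log_rpow (by linarith)) (hω.mono fun _ => le_of_lt)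

end MeasureTheory

theorem stmt5_general
    {Ω : Type*} {m0 : MeasurableSpace Ω} {μ : Measure Ω} [IsProbabilityMeasure μ]
    (F : Filtration ℕ m0) (X : ℕ → Ω → ℝ)
    (hX0 : ∀ ω, X 0 ω = 0)
    (h : ℝ → ℝ)
    (hconc : ConcaveOn ℝ (Set.Ici 0) h) (hhnn : ∀ y, 0 ≤ y → 0 ≤ h y)
    (C : ℝ)
    (hintegrable : ∀ t, Integrable (fun ω => h (max (X (t + 1) ω - X t ω) 0)) μ)
    (hbound : ∀ t, ∀ᵐ ω ∂μ,
      (μ[fun ω' => h (max (X (t + 1) ω' - X t ω') 0)|F t]) ω ≤ C)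
    (ε : ℝ) (hε : 0 < ε) :
    ∀ᵐ ω ∂μ, ∀ᶠ t : ℕ in atTop,
      X t ω ≤ (∑ s ∈ Finset.range t, max (X (s + 1) ω - X s ω) 0) ∧
      h (∑ s ∈ Finset.range t, max (X (s + 1) ω - X s ω) 0)
        ≤ (t:ℝ) * (Real.log t) ^ (1 + ε) := by
  filter_upwards [ae_eventually_sum_range_le_mul_log_rpow
    (fun s ω => hhnn _ (le_max_right _ _)) hintegrable
    (fun s => integral_le_of_ae_condExp_le (F.le s) (hbound s)) hε] with ω hω
  filter_upwards [hω, eventually_ge_atTop 1] with t hsum ht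
  constructor
  · calc X t ω = ∑ s ∈ Finset.range t, (X (s + 1) ω - X s ω) := by
          rw [Finset.sum_range_sub (X · ω), hX0, sub_zero]
      _ ≤ _ := Finset.sum_le_sum fun s _ => le_max_left _ _
  · exact (hconc.map_sum_le (hhnn 0 le_rfl) (Finset.nonempty_range_iff.2 (by omega))
      fun s _ => le_max_right _ _).trans hsum

/-- Almost-sure upper bound via a concave increasing function `h`: if
`E[h(Δ_t⁺)|F_t] ≤ C` a.s., then for any `ε > 0`, a.s. for all but finitely many
`t`, `X_t ≤ Σ_{s<t} Δ_s⁺` and `h(Σ_{s<t} Δ_s⁺) ≤ t (log t)^{1+ε}` (i.e. the sum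
is at most `h⁻¹(t (log t)^{1+ε})`). -/
theorem stmt5
    {Ω : Type*} {m0 : MeasurableSpace Ω} {μ : Measure Ω} [IsProbabilityMeasure μ]
    (F : Filtration ℕ m0) (X : ℕ → Ω → ℝ) (hadapted : Adapted F X)
    (hX0 : ∀ ω, X 0 ω = 0)
    (h : ℝ → ℝ) (hmono : MonotoneOn h (Set.Ici 0))
    (hconc : ConcaveOn ℝ (Set.Ici 0) h) (hhnn : ∀ y, 0 ≤ y → 0 ≤ h y)
    (C : ℝ)
    (hintegrable : ∀ t, Integrable (fun ω => h (max (X (t + 1) ω - X t ω) 0)) μ)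
    (hbound : ∀ t, ∀ᵐ ω ∂μ,
      (μ[fun ω' => h (max (X (t + 1) ω' - X t ω') 0)|F t]) ω ≤ C)
    (ε : ℝ) (hε : 0 < ε) :
    ∀ᵐ ω ∂μ, ∀ᶠ t : ℕ in atTop,
      X t ω ≤ (∑ s ∈ Finset.range t, max (X (s + 1) ω - X s ω) 0) ∧
      h (∑ s ∈ Finset.range t, max (X (s + 1) ω - X s ω) 0)
        ≤ (t:ℝ) * (Real.log t) ^ (1 + ε) :=
  stmt5_general F X hX0 h hconc hhnn C hintegrable hbound ε hε
end

section
/- Let (X_t)_{t∈ℤ⁺} be adapted to (F_t) with increments Δ_t = X_{t+1} − X_t. Fix α ∈ (0,1) and β > α, and suppose there exist c > 0, C < ∞, x₀ < ∞ with E[(Δ_t⁻)^β | F_t] ≤ C a.s. for all t, and E[Δ_t⁺ 1{Δ_t⁺ ≤ x} | F_t] ≥ c x^{1−α} a.s. for all x ≥ x₀ and all t. For z ∈ ℝ, δ > 0 define f_{z,δ}(y) = 1 if y ≤ z and f_{z,δ}(y) = (1 + y − z)^{−δ} if y > z. Then for any δ ∈ (0, β − α) there exists A > 0 (independent of z) such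 that for every z ∈ ℝ and every t, E[f_{z,δ}(X_{t+1}) − f_{z,δ}(X_t) | F_t] ≤ 0 almost surely on the event {X_t > z + A}. -/
open MeasureTheory Filter

/-!
Write `g = 1 + X_t - z` and `n = ⌊g⌋`. Since `x ↦ x ^ (-δ)` is convex, its chords on `[g, 2g]`
and `[g/2, g]` bound the change of `f_{z,δ}` under an up-jump `d ≤ n` by `-a_n d` and under a
down-jump `e ≤ g/2` by a multiple of `g^(-δ-1) e`; a larger down-jump costs at most
`1 ≤ (2e/n)^β`. Hence on the `F_t`-measurable event `{⌊g⌋ = n}` the increment is at most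
`-a_n Δ⁺ 1{Δ⁺ ≤ n} + b_n (1 + (Δ⁻)^β)`, where `a_n ≍ n^(-δ-1)` and
`b_n ≍ n^(-δ-min β 1) + n^(-β)`. Conditioning, the drift there is at most
`-a_n c n^(1-α) + b_n (1 + C)`, which is negative for large `n` because `δ + α` is smaller than
both `δ + min β 1` and `β`.
-/

open Set Topology

theorem convexOn_rpow_neg {p : ℝ} (hp : 0 ≤ p) : ConvexOn ℝ (Ioi 0) fun x : ℝ => x ^ (-p) := by
  have hlog : ConvexOn ℝ (Ioi 0) fun x : ℝ => p • -Real.log x :=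
    strictConcaveOn_log_Ioi.concaveOn.neg.smul hp
  refine ⟨convex_Ioi 0, fun x hx y hy a b ha hb hab => ?_⟩
  have hxy : 0 < a • x + b • y := convex_Ioi 0 hx hy ha hb hab
  have h := hlog.2 hx hy ha hb hab
  simp only [smul_eq_mul] at h hxy ⊢
  rw [Real.rpow_def_of_pos hx, Real.rpow_def_of_pos hy, Real.rpow_def_of_pos hxy]
  calc Real.exp (Real.log (a * x + b * y) * -p)
      ≤ Real.exp (a * (Real.log x * -p) + b * (Real.log y * -p)) :=
        Real.exp_le_exp.2 (by linarith)
    _ ≤ a * Real.exp (Real.log x * -p) + b * Real.exp (Real.log y * -p) :=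
      convexOn_exp.2 trivial trivial ha hb hab

theorem rpow_neg_add_le {δ g d : ℝ} (hδ : 0 ≤ δ) (hg : 0 < g) (hd : 0 ≤ d) (hdg : d ≤ g) :
    (g + d) ^ (-δ) ≤ g ^ (-δ) - (1 - 2 ^ (-δ)) * g ^ (-δ - 1) * d := by
  have h := (convexOn_rpow_neg hδ).2 (mem_Ioi.2 hg) (mem_Ioi.2 (by linarith : 0 < 2 * g))
    (sub_nonneg.2 ((div_le_one hg).2 hdg)) (div_nonneg hd hg.le) (sub_add_cancel 1 (d / g))
  simp only [smul_eq_mul] at h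
  rw [show (1 - d / g) * g + d / g * (2 * g) = g + d by field_simp; ring,
    Real.mul_rpow zero_le_two hg.le] at h
  refine h.trans (le_of_eq ?_)
  rw [Real.rpow_sub_one hg.ne']
  field_simp
  ring

theorem rpow_neg_sub_le {δ g d : ℝ} (hδ : 0 ≤ δ) (hg : 0 < g) (hd : 0 ≤ d) (hdg : d ≤ g / 2) :
    (g - d) ^ (-δ) ≤ g ^ (-δ) + 2 * (2 ^ δ - 1) * g ^ (-δ - 1) * d := by
  have h := (convexOn_rpow_neg hδ).2 (mem_Ioi.2 hg) (mem_Ioi.2 (by linarith : 0 < g / 2))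
    (sub_nonneg.2 ((div_le_one hg).2 (by linarith : 2 * d ≤ g)))
    (div_nonneg (by linarith : 0 ≤ 2 * d) hg.le) (sub_add_cancel 1 (2 * d / g))
  simp only [smul_eq_mul] at h
  rw [show (1 - 2 * d / g) * g + 2 * d / g * (g / 2) = g - d by field_simp; ring,
    Real.div_rpow hg.le zero_le_two, Real.rpow_neg zero_le_two] at h
  refine h.trans (le_of_eq ?_)
  rw [Real.rpow_sub_one hg.ne']
  field_simp
  ring

theorem le_rpow_one_sub_min_mul_one_add_rpow {β e n : ℝ} (hβ : 0 < β) (he : 0 ≤ e)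
    (hen : e ≤ n) :
    e ≤ n ^ (1 - min β 1) * (1 + e ^ β) := by
  rcases le_total β 1 with hβ1 | hβ1
  · rw [min_eq_left hβ1]
    calc e = e ^ (1 - β) * e ^ β := by
          rw [← Real.rpow_add_of_nonneg he (by linarith) hβ.le, sub_add_cancel, Real.rpow_one]
      _ ≤ n ^ (1 - β) * (1 + e ^ β) :=
          mul_le_mul (Real.rpow_le_rpow he hen (by linarith)) (by linarith)
            (Real.rpow_nonneg he β) (Real.rpow_nonneg (he.trans hen) _)
  · rw [min_eq_right hβ1, sub_self, Real.rpow_zero, one_mul]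
    rcases le_total e 1 with he1 | he1
    · linarith [Real.rpow_nonneg he β]
    · linarith [Real.self_le_rpow_of_one_le he1 hβ1]

theorem eventually_mul_rpow_neg_add_le {a b k p q r : ℝ} (hk : 0 < k) (hp : r < p)
    (hq : r < q) : ∀ᶠ x in atTop, a * x ^ (-p) + b * x ^ (-q) ≤ k * x ^ (-r) := by
  have hsmall :
      Tendsto (fun x : ℝ => a * x ^ (-(p - r)) + b * x ^ (-(q - r))) atTop (𝓝 0) := by
    simpa using ((tendsto_rpow_neg_atTop (sub_pos.2 hp)).const_mul a).add
      ((tendsto_rpow_neg_atTop (sub_pos.2 hq)).const_mul b)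
  filter_upwards [hsmall.eventually (gt_mem_nhds hk), eventually_gt_atTop 0] with x hx hx0
  calc a * x ^ (-p) + b * x ^ (-q)
      = (a * x ^ (-(p - r)) + b * x ^ (-(q - r))) * x ^ (-r) := by
        rw [add_mul, mul_assoc, mul_assoc, ← Real.rpow_add hx0, ← Real.rpow_add hx0]
        ring_nf
    _ ≤ k * x ^ (-r) := mul_le_mul_of_nonneg_right hx.le (Real.rpow_nonneg hx0.le _)

/-- The function `f_{z,δ}` of the paper. -/
noncomputable def lyapunov (z δ y : ℝ) : ℝ := if y ≤ z then 1 else (1 + y - z) ^ (-δ)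

-- `gainCoeff δ n` and `lossCoeff β δ n` are the `a_n` and `b_n` above.
noncomputable def gainCoeff (δ x : ℝ) : ℝ := (1 - 2 ^ (-δ)) * (2 * x) ^ (-δ - 1)

noncomputable def lossCoeff (β δ x : ℝ) : ℝ :=
  2 * (2 ^ δ - 1) * x ^ (-(δ + min β 1)) + 2 ^ β * x ^ (-β)

section Lyapunov

variable {z δ y : ℝ}

theorem lyapunov_eq_rpow (h : z ≤ y) : lyapunov z δ y = (1 + y - z) ^ (-δ) := by
  unfold lyapunov
  split_ifs with hy
  · rw [show 1 + y - z = 1 by linarith, Real.one_rpow]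
  · rfl

theorem lyapunov_le_rpow (hδ : 0 ≤ δ) (h : 0 < 1 + y - z) :
    lyapunov z δ y ≤ (1 + y - z) ^ (-δ) := by
  unfold lyapunov
  split_ifs with hy
  · exact Real.one_le_rpow_of_pos_of_le_one_of_nonpos h (by linarith) (by linarith)
  · rfl

theorem lyapunov_nonneg : 0 ≤ lyapunov z δ y := by
  unfold lyapunov
  split_ifs with hy
  · exact zero_le_one
  · exact Real.rpow_nonneg (by linarith [not_le.1 hy]) _

theorem lyapunov_le_one (hδ : 0 ≤ δ) : lyapunov z δ y ≤ 1 := by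
  unfold lyapunov
  split_ifs with hy
  · exact le_rfl
  · exact Real.rpow_le_one_of_one_le_of_nonpos (by linarith [not_le.1 hy]) (by linarith)

theorem measurable_lyapunov : Measurable (lyapunov z δ) :=
  Measurable.ite measurableSet_Iic measurable_const (by fun_prop)

end Lyapunov

theorem gainCoeff_nonneg {δ x : ℝ} (hδ : 0 ≤ δ) (hx : 0 ≤ x) : 0 ≤ gainCoeff δ x :=
  mul_nonneg (sub_nonneg.2 (Real.rpow_le_one_of_one_le_of_nonpos one_le_two (by linarith)))
    (Real.rpow_nonneg (by linarith) _)

theorem lossCoeff_nonneg {β δ x : ℝ} (hδ : 0 ≤ δ) (hx : 0 ≤ x) : 0 ≤ lossCoeff β δ x := by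
  have h2δ : (1 : ℝ) ≤ 2 ^ δ := Real.one_le_rpow one_le_two hδ
  unfold lossCoeff
  have := Real.rpow_nonneg hx (-(δ + min β 1))
  have := Real.rpow_nonneg hx (-β)
  have := Real.rpow_nonneg zero_le_two β
  nlinarith

section Jumps

variable {β δ z w n : ℝ}

theorem lyapunov_add_sub_le (hδ : 0 < δ) (hn : 1 ≤ n) (hnw : n ≤ 1 + w - z)
    (hwn : 1 + w - z ≤ 2 * n) {d : ℝ} (hd : 0 ≤ d) :
    lyapunov z δ (w + d) - lyapunov z δ w ≤ -(gainCoeff δ n * (Iic n).indicator id d) := by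
  set g := 1 + w - z with hg
  have hg0 : 0 < g := by linarith
  rw [lyapunov_eq_rpow (by linarith), lyapunov_eq_rpow (by linarith),
    show 1 + (w + d) - z = g + d by ring]
  by_cases hdn : d ≤ n
  · rw [indicator_of_mem (mem_Iic.2 hdn), id]
    have hgain : gainCoeff δ n ≤ (1 - 2 ^ (-δ)) * g ^ (-δ - 1) :=
      mul_le_mul_of_nonneg_left (Real.rpow_le_rpow_of_nonpos hg0 hwn (by linarith))
        (sub_nonneg.2 (Real.rpow_le_one_of_one_le_of_nonpos one_le_two (by linarith)))
    have := rpow_neg_add_le hδ.le hg0 hd (by linarith)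
    nlinarith
  · rw [indicator_of_notMem (by simpa using hdn), mul_zero, neg_zero, sub_nonpos]
    exact Real.rpow_le_rpow_of_nonpos hg0 (by linarith) (by linarith)

theorem lyapunov_sub_sub_le (hδ : 0 < δ) (hβ : 0 < β) (hn : 1 ≤ n) (hnw : n ≤ 1 + w - z)
    (hwn : 1 + w - z ≤ 2 * n) {e : ℝ} (he : 0 ≤ e) :
    lyapunov z δ (w - e) - lyapunov z δ w ≤ lossCoeff β δ n * (1 + e ^ β) := by
  set g := 1 + w - z with hg
  have hg0 : 0 < g := by linarith
  have hn0 : 0 < n := by linarith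
  have hL : (0 : ℝ) ≤ 2 * (2 ^ δ - 1) := by linarith [Real.one_le_rpow one_le_two hδ.le]
  have h1e : 0 ≤ 1 + e ^ β := by linarith [Real.rpow_nonneg he β]
  have hsmall : 0 ≤ 2 * (2 ^ δ - 1) * n ^ (-(δ + min β 1)) * (1 + e ^ β) :=
    mul_nonneg (mul_nonneg hL (Real.rpow_nonneg hn0.le _)) h1e
  have hcoeff : 0 ≤ 2 ^ β * n ^ (-β) :=
    mul_nonneg (Real.rpow_nonneg zero_le_two β) (Real.rpow_nonneg hn0.le _)
  rw [lyapunov_eq_rpow (z := z) (y := w) (by linarith), ← hg]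
  unfold lossCoeff
  rw [add_mul]
  by_cases heg : e ≤ g / 2
  · have hup : lyapunov z δ (w - e) ≤ (g - e) ^ (-δ) := by
      rw [show g - e = 1 + (w - e) - z by ring]
      exact lyapunov_le_rpow hδ.le (by linarith)
    have hchord := rpow_neg_sub_le hδ.le hg0 he heg
    have hgn : g ^ (-δ - 1) ≤ n ^ (-δ - 1) := Real.rpow_le_rpow_of_nonpos hn0 hnw (by linarith)
    have hen := le_rpow_one_sub_min_mul_one_add_rpow hβ he (by linarith : e ≤ n)
    have : 2 * (2 ^ δ - 1) * g ^ (-δ - 1) * e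
        ≤ 2 * (2 ^ δ - 1) * n ^ (-(δ + min β 1)) * (1 + e ^ β) :=
      calc 2 * (2 ^ δ - 1) * g ^ (-δ - 1) * e
          ≤ 2 * (2 ^ δ - 1) * n ^ (-δ - 1) * (n ^ (1 - min β 1) * (1 + e ^ β)) := by gcongr
        _ = _ := by
          rw [show -(δ + min β 1) = (-δ - 1) + (1 - min β 1) by ring, Real.rpow_add hn0]
          ring
    linarith [mul_nonneg hcoeff h1e]
  · have hjump : (1 : ℝ) ≤ (2 * e / n) ^ β :=
      Real.one_le_rpow ((one_le_div hn0).2 (by linarith)) hβ.le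
    rw [Real.div_rpow (by positivity) hn0.le, Real.mul_rpow zero_le_two he] at hjump
    have hjump' : 1 ≤ 2 ^ β * n ^ (-β) * e ^ β := by
      rw [Real.rpow_neg hn0.le]
      linarith [show 2 ^ β * e ^ β / n ^ β = 2 ^ β * (n ^ β)⁻¹ * e ^ β by ring]
    have hup := lyapunov_le_one (z := z) (y := w - e) hδ.le
    have hg' := Real.rpow_nonneg hg0.le (-δ)
    linarith [mul_add (2 ^ β * n ^ (-β)) 1 (e ^ β)]

end Jumps

theorem lyapunov_sub_le {β δ z w n : ℝ} (hδ : 0 < δ) (hβ : 0 < β) (hn : 1 ≤ n)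
    (hnw : n ≤ 1 + w - z) (hwn : 1 + w - z ≤ 2 * n) (u : ℝ) :
    lyapunov z δ u - lyapunov z δ w ≤
      -(gainCoeff δ n * (Iic n).indicator id (max (u - w) 0))
        + lossCoeff β δ n * (1 + max (-(u - w)) 0 ^ β) := by
  rcases le_total w u with hwu | huw
  · have hup := lyapunov_add_sub_le hδ hn hnw hwn (sub_nonneg.2 hwu)
    rw [add_sub_cancel] at hup
    rw [max_eq_left (sub_nonneg.2 hwu), max_eq_right (by linarith), Real.zero_rpow hβ.ne',
      add_zero, mul_one]
    linarith [lossCoeff_nonneg (β := β) hδ.le (by linarith : 0 ≤ n)]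
  · have hdown := lyapunov_sub_sub_le (β := β) hδ hβ hn hnw hwn (sub_nonneg.2 huw)
    rw [sub_sub_cancel] at hdown
    rw [max_eq_right (by linarith), max_eq_left (by linarith), neg_sub,
      indicator_of_mem (mem_Iic.2 (by linarith)), id, mul_zero, neg_zero, zero_add]
    exact hdown

theorem exists_lossCoeff_le_gainCoeff {α β δ c C : ℝ} (x₀ : ℝ) (hα : α < 1) (hαβ : α < β)
    (hc : 0 < c) (hδ : δ ∈ Ioo 0 (β - α)) :
    ∃ A, 1 ≤ A ∧ x₀ ≤ A ∧ ∀ x, A ≤ x →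
      lossCoeff β δ x * (1 + C) ≤ gainCoeff δ x * (c * x ^ (1 - α)) := by
  have h2δ : (2 : ℝ) ^ (-δ) < 1 :=
    Real.rpow_lt_one_of_one_lt_of_neg one_lt_two (by linarith [hδ.1])
  have hk : 0 < (1 - 2 ^ (-δ)) * 2 ^ (-δ - 1) * c :=
    mul_pos (mul_pos (sub_pos.2 h2δ) (Real.rpow_pos_of_pos two_pos _)) hc
  have hev := eventually_mul_rpow_neg_add_le (a := 2 * (2 ^ δ - 1) * (1 + C))
    (b := 2 ^ β * (1 + C)) (p := δ + min β 1) (q := β) (r := δ + α) hk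
    (by linarith [lt_min hαβ hα]) (by linarith [hδ.2])
  obtain ⟨A, hA⟩ := eventually_atTop.1 (hev.and (eventually_gt_atTop 0))
  refine ⟨max A (max 1 x₀), le_max_of_le_right (le_max_left _ _),
    le_max_of_le_right (le_max_right _ _), fun x hx => ?_⟩
  obtain ⟨h, hx0⟩ := hA x (le_of_max_le_left hx)
  convert h using 1
  · unfold lossCoeff; ring
  · unfold gainCoeff
    rw [Real.mul_rpow zero_le_two hx0.le, show -(δ + α) = (-δ - 1) + (1 - α) by ring,
      Real.rpow_add hx0]
    ring

section CondExp

variable {Ω : Type*} {m m0 : MeasurableSpace Ω} {μ : Measure Ω}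

theorem ae_condExp_le_condExp_of_forall_mem (hm : m ≤ m0) {s : Set Ω} (hs : MeasurableSet[m] s)
    {f g : Ω → ℝ} (hf : Integrable f μ) (hg : Integrable g μ) (hfg : ∀ ω ∈ s, f ω ≤ g ω) :
    ∀ᵐ ω ∂μ, ω ∈ s → μ[f|m] ω ≤ μ[g|m] ω := by
  have hmono := condExp_mono (m := m) (hf.indicator (hm s hs)) (hg.indicator (hm s hs))
    (Eventually.of_forall fun ω => by by_cases hω : ω ∈ s <;> simp [hω, hfg])
  filter_upwards [hmono, condExp_indicator hf hs, condExp_indicator hg hs] with ω h hfω hgω hω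
  rwa [hfω, hgω, indicator_of_mem hω, indicator_of_mem hω] at h

theorem condExp_neg_mul_add_mul_one_add [IsFiniteMeasure μ] (hm : m ≤ m0) {P W : Ω → ℝ}
    (hP : Integrable P μ) (hW : Integrable W μ) (a b : ℝ) :
    μ[fun ω => -(a * P ω) + b * (1 + W ω)|m] =ᵐ[μ]
      fun ω => -(a * μ[P|m] ω) + b * (1 + μ[W|m] ω) := by
  change μ[-(a • P) + b • ((fun _ => (1 : ℝ)) + W)|m] =ᵐ[μ] _
  filter_upwards [condExp_add (hP.smul a).neg (((integrable_const 1).add hW).smul b) m,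
    condExp_neg (a • P) m, condExp_smul a P m, condExp_smul b ((fun _ => (1 : ℝ)) + W) m,
    condExp_add (integrable_const (1 : ℝ)) hW m] with ω h1 h2 h3 h4 h5
  simp only [Pi.add_apply, Pi.neg_apply, Pi.smul_apply, smul_eq_mul, condExp_const hm]
    at h1 h2 h3 h4 h5
  rw [h1, h2, h3, h4, h5]

theorem ae_condExp_le_of_forall_mem_le [IsFiniteMeasure μ] (hm : m ≤ m0) {s : Set Ω}
    (hs : MeasurableSet[m] s) {f P W : Ω → ℝ} (hf : Integrable f μ) (hP : Integrable P μ)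
    (hW : Integrable W μ) {a b p C : ℝ} (ha : 0 ≤ a) (hb : 0 ≤ b)
    (hfs : ∀ ω ∈ s, f ω ≤ -(a * P ω) + b * (1 + W ω))
    (hPp : ∀ᵐ ω ∂μ, p ≤ μ[P|m] ω) (hWC : ∀ᵐ ω ∂μ, μ[W|m] ω ≤ C) :
    ∀ᵐ ω ∂μ, ω ∈ s → μ[f|m] ω ≤ -(a * p) + b * (1 + C) := by
  filter_upwards [ae_condExp_le_condExp_of_forall_mem
      (g := fun ω => -(a * P ω) + b * (1 + W ω)) hm hs hf
      (((hP.const_mul a).neg).add (((integrable_const 1).add hW).const_mul b)) hfs,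
    condExp_neg_mul_add_mul_one_add hm hP hW a b, hPp, hWC] with ω hle heq hpω hCω hω
  rw [heq] at hle
  nlinarith [hle hω]

theorem integrable_lyapunov_sub [IsFiniteMeasure μ] {z δ : ℝ} (hδ : 0 ≤ δ) {u w : Ω → ℝ}
    (hu : Measurable u) (hw : Measurable w) :
    Integrable (fun ω => lyapunov z δ (u ω) - lyapunov z δ (w ω)) μ :=
  Integrable.of_mem_Icc (-1) 1
    ((measurable_lyapunov.comp hu).sub (measurable_lyapunov.comp hw)).aemeasurable
    (Eventually.of_forall fun ω => by
      constructor <;> linarith [lyapunov_nonneg (z := z) (δ := δ) (y := u ω),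
        lyapunov_nonneg (z := z) (δ := δ) (y := w ω), lyapunov_le_one (z := z) (y := u ω) hδ,
        lyapunov_le_one (z := z) (y := w ω) hδ])

theorem integrable_indicator_setOf_le_self [IsFiniteMeasure μ] {Y : Ω → ℝ} (hY : Measurable Y)
    (hY0 : 0 ≤ Y) {x : ℝ} (hx : 0 ≤ x) :
    Integrable (fun ω => {ω | Y ω ≤ x}.indicator Y ω) μ :=
  Integrable.of_mem_Icc 0 x (hY.indicator (measurableSet_le hY measurable_const)).aemeasurable
    (Eventually.of_forall fun ω => by
      by_cases h : Y ω ≤ x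
      · simpa [h] using hY0 ω
      · simpa [h] using hx)

end CondExp

/-- Local supermartingale (Lyapunov drift) condition for
`f_{z,δ}(y) = 1` for `y ≤ z`, `(1+y-z)^{-δ}` for `y > z` (Lemma 4 of the paper). -/
theorem stmt7
    {Ω : Type*} {m0 : MeasurableSpace Ω} {μ : Measure Ω} [IsProbabilityMeasure μ]
    (F : Filtration ℕ m0) (X : ℕ → Ω → ℝ) (hadapted : Adapted F X)
    (α β c C x₀ : ℝ) (hα : α ∈ Set.Ioo (0:ℝ) 1) (hβ : α < β) (hc : 0 < c)
    (hnegint : ∀ t, Integrable (fun ω => (max (-(X (t + 1) ω - X t ω)) 0) ^ β) μ)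
    (hneg : ∀ t, ∀ᵐ ω ∂μ,
      (μ[fun ω' => (max (-(X (t + 1) ω' - X t ω')) 0) ^ β|F t]) ω ≤ C)
    (hpos : ∀ t, ∀ x, x₀ ≤ x → ∀ᵐ ω ∂μ,
      c * x ^ (1 - α) ≤ (μ[fun ω' =>
        Set.indicator {ω'' | max (X (t + 1) ω'' - X t ω'') 0 ≤ x}
          (fun ω'' => max (X (t + 1) ω'' - X t ω'') 0) ω'|F t]) ω)
    (δ : ℝ) (hδ : δ ∈ Set.Ioo 0 (β - α)) :
    ∃ A > (0:ℝ), ∀ z : ℝ, ∀ t, ∀ᵐ ω ∂μ, z + A < X t ω →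
      (μ[fun ω' =>
          (if X (t + 1) ω' ≤ z then (1:ℝ) else (1 + X (t + 1) ω' - z) ^ (-δ))
          - (if X t ω' ≤ z then (1:ℝ) else (1 + X t ω' - z) ^ (-δ))|F t]) ω ≤ 0 := by
  obtain ⟨A, hA1, hAx₀, hA⟩ := exists_lossCoeff_le_gainCoeff (C := C) x₀ hα.2 hβ hc hδ
  refine ⟨A, by linarith, fun z t => ?_⟩
  have hXt : Measurable (X t) := (hadapted t).mono (F.le t) le_rfl
  have hXt1 : Measurable (X (t + 1)) := (hadapted (t + 1)).mono (F.le (t + 1)) le_rfl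
  have hlevel : ∀ n : ℕ, ∀ᵐ ω ∂μ, A ≤ n → 1 + X t ω - z ∈ Ico (n : ℝ) (n + 1) →
      μ[fun ω => lyapunov z δ (X (t + 1) ω) - lyapunov z δ (X t ω)|F t] ω ≤ 0 := by
    intro n
    by_cases hn : A ≤ n
    swap
    · exact Eventually.of_forall fun ω h => absurd h hn
    have hs : MeasurableSet[F t] ((fun ω => 1 + X t ω - z) ⁻¹' Ico (n : ℝ) (n + 1)) :=
      (((hadapted t).const_add 1).sub_const z) measurableSet_Ico
    filter_upwards [ae_condExp_le_of_forall_mem_le (F.le t) hs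
      (integrable_lyapunov_sub hδ.1.le hXt1 hXt)
      (integrable_indicator_setOf_le_self (Y := fun ω => max (X (t + 1) ω - X t ω) 0)
        ((hXt1.sub hXt).max measurable_const) (fun ω => le_max_right _ _)
        (by linarith : (0 : ℝ) ≤ n))
      (hnegint t) (gainCoeff_nonneg hδ.1.le (by linarith))
      (lossCoeff_nonneg (β := β) hδ.1.le (by linarith))
      (fun ω hω => lyapunov_sub_le hδ.1 (hα.1.trans hβ) (hA1.trans hn) hω.1 (by linarith [hω.2])
        (X (t + 1) ω)) (hpos t n (hAx₀.trans hn)) (hneg t)] with ω hω _ hlev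
    linarith [hω hlev, hA n hn]
  filter_upwards [ae_all_iff.2 hlevel] with ω hω hzA
  have hg : 0 ≤ 1 + X t ω - z := by linarith
  exact hω ⌊1 + X t ω - z⌋₊ (by linarith [Nat.lt_floor_add_one (1 + X t ω - z)])
    ⟨Nat.floor_le hg, Nat.lt_floor_add_one _⟩
end

section
/- Let (X_t)_{t∈ℤ⁺} be adapted to (F_t) with increments Δ_t = X_{t+1} − X_t. Fix α ∈ (0,1) and β > α, and suppose there exist C < ∞, c > 0, x₀ < ∞ such that E[(Δ_t⁺)^α | F_t] ≤ C a.s. for all t and P[Δ_t⁻ ≥ x | F_t] ≥ c x^{−β} a.s. for all x ≥ x₀ and all t. With f_{z,δ}(y) = 1 for y ≤ z and (1 + y − z)^{−δ} for y > z, for any δ > β − α there exists A > 0 such that for every z ∈ ℝ and every t, E[f_{z,δ}(X_{t+1}) − f_{z,δ}(X_t) | F_t] ≥ 0 almost surely on {X_t > z + A}. -/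
/-!
On `{X_t > z + A}` put `a = 1 + X_t - z`. A jump into `(-∞, z]` raises `f_{z,δ}` by
`1 - a^{-δ}`, a downward jump staying above `z` does not lower it, and an upward jump `u` lowers
it by at most `a^{-δ} min(1, δu/a) ≤ δ^α a^{-(δ+α)} u^α`. Conditionally on `F_t`, the gain is
at least `(1 - a^{-δ}) c a^{-β}`, since a downward jump of size more than `a - 1` suffices, and
the loss at most `δ^α a^{-(δ+α)} C`; as `δ + α > β`, the gain wins once `a` is large.
-/

open MeasureTheory Filter Real

/-- The paper's `f_{z,δ}`. -/
noncomputable def tailWeight (z δ y : ℝ) : ℝ := if y ≤ z then 1 else (1 + y - z) ^ (-δ)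

lemma tailWeight_nonneg (z δ y : ℝ) : 0 ≤ tailWeight z δ y := by
  unfold tailWeight
  split_ifs with h
  · exact zero_le_one
  · exact rpow_nonneg (by linarith [not_le.1 h]) _

lemma tailWeight_le_one {δ : ℝ} (hδ : 0 ≤ δ) (z y : ℝ) : tailWeight z δ y ≤ 1 := by
  unfold tailWeight
  split_ifs with h
  · exact le_rfl
  · exact rpow_le_one_of_one_le_of_nonpos (by linarith [not_le.1 h]) (by linarith)

lemma measurable_tailWeight (z δ : ℝ) : Measurable (tailWeight z δ) :=
  Measurable.ite measurableSet_Iic measurable_const (by fun_prop)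

lemma one_sub_rpow_neg_le_mul {δ v : ℝ} (hδ : 0 ≤ δ) (hv : 0 ≤ v) :
    1 - (1 + v) ^ (-δ) ≤ δ * v := by
  have hlog : Real.log (1 + v) ≤ v := by
    linarith [Real.log_le_sub_one_of_pos (show 0 < 1 + v by linarith)]
  have hexp : Real.exp (-(δ * v)) ≤ (1 + v) ^ (-δ) := by
    rw [Real.rpow_def_of_pos (by linarith)]
    exact Real.exp_le_exp.2 (by nlinarith)
  linarith [Real.add_one_le_exp (-(δ * v))]

lemma one_sub_rpow_neg_le_mul_rpow {p δ v : ℝ} (hp0 : 0 < p) (hp1 : p ≤ 1) (hδ : 0 ≤ δ)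
    (hv : 0 ≤ v) : 1 - (1 + v) ^ (-δ) ≤ (δ * v) ^ p := by
  rcases le_total 1 (δ * v) with h | h
  · have : 0 ≤ (1 + v) ^ (-δ) := rpow_nonneg (by linarith) _
    linarith [one_le_rpow h hp0.le]
  · exact (one_sub_rpow_neg_le_mul hδ hv).trans
      (self_le_rpow_of_le_one (by positivity) h hp1)

lemma rpow_neg_sub_rpow_neg_add_le {p δ a u : ℝ} (hp0 : 0 < p) (hp1 : p ≤ 1) (hδ : 0 ≤ δ)
    (ha : 0 < a) (hu : 0 ≤ u) :
    a ^ (-δ) - (a + u) ^ (-δ) ≤ δ ^ p * a ^ (-(δ + p)) * u ^ p := by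
  have hua : 0 ≤ u / a := by positivity
  calc a ^ (-δ) - (a + u) ^ (-δ) = a ^ (-δ) * (1 - (1 + u / a) ^ (-δ)) := by
        rw [mul_sub, mul_one, ← mul_rpow ha.le (by positivity), mul_add, mul_one,
          mul_div_cancel₀ _ ha.ne']
    _ ≤ a ^ (-δ) * (δ * (u / a)) ^ p :=
        mul_le_mul_of_nonneg_left (one_sub_rpow_neg_le_mul_rpow hp0 hp1 hδ hua)
          (rpow_nonneg ha.le _)
    _ = δ ^ p * a ^ (-(δ + p)) * u ^ p := by
        rw [mul_rpow hδ hua, div_rpow hu ha.le, neg_add, rpow_add ha, rpow_neg ha.le p]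
        field_simp

lemma eventually_mul_rpow_neg_le {β γ δ c : ℝ} (K : ℝ) (hc : 0 < c) (hβγ : β < γ)
    (hδ : 0 < δ) :
    ∀ᶠ a in atTop, K * a ^ (-γ) ≤ c * a ^ (-β) * (1 - a ^ (-δ)) := by
  have hsmall := (tendsto_rpow_neg_atTop hδ).eventually
    (ge_mem_nhds (show (0 : ℝ) < 1 / 2 by norm_num))
  have hdecay := ((tendsto_rpow_neg_atTop (sub_pos.2 hβγ)).const_mul K).eventually
    (ge_mem_nhds (show K * 0 < c / 2 by simpa using half_pos hc))
  filter_upwards [hsmall, hdecay, eventually_gt_atTop 0] with a h₁ h₂ ha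
  have hsplit : a ^ (-γ) = a ^ (-(γ - β)) * a ^ (-β) := by
    rw [← rpow_add ha]; ring_nf
  have hβa : 0 < a ^ (-β) := rpow_pos_of_pos ha _
  rw [hsplit]
  nlinarith [mul_le_mul_of_nonneg_right h₂ hβa.le,
    mul_le_mul_of_nonneg_left h₁ (mul_pos hc hβa).le]

lemma sub_le_tailWeight_sub {p δ z x : ℝ} (hp0 : 0 < p) (hp1 : p ≤ 1) (hδ : 0 ≤ δ)
    (hzx : z < x) (y : ℝ) :
    (1 - (1 + x - z) ^ (-δ)) * (if y ≤ z then 1 else 0)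
        - δ ^ p * (1 + x - z) ^ (-(δ + p)) * (max (y - x) 0) ^ p
      ≤ tailWeight z δ y - tailWeight z δ x := by
  have ha : 0 < 1 + x - z := by linarith
  simp only [tailWeight, if_neg (not_le.2 hzx)]
  rcases le_or_gt y x with hyx | hxy
  · rw [max_eq_right (by linarith), zero_rpow hp0.ne', mul_zero, sub_zero]
    split_ifs with hyz
    · simp
    · have := rpow_le_rpow_of_nonpos (by linarith [not_le.1 hyz])
        (by linarith : 1 + y - z ≤ 1 + x - z) (neg_nonpos.2 hδ)
      simpa using this
  · have hyz : ¬y ≤ z := by linarith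
    simp only [if_neg hyz, max_eq_left (sub_pos.2 hxy).le, mul_zero, zero_sub]
    have := rpow_neg_sub_rpow_neg_add_le hp0 hp1 hδ ha (sub_pos.2 hxy).le
    rw [show 1 + x - z + (y - x) = 1 + y - z by ring] at this
    linarith

section CondExp

variable {Ω : Type*} {m m0 : MeasurableSpace Ω} {μ : Measure Ω}

lemma ae_condExp_le_condExp_of_le_on (hm : m ≤ m0) [SigmaFinite (μ.trim hm)] {s : Set Ω}
    (hs : MeasurableSet[m] s) {f g : Ω → ℝ} (hf : Integrable f μ) (hg : Integrable g μ)
    (hfg : ∀ ω ∈ s, f ω ≤ g ω) : ∀ᵐ ω ∂μ, ω ∈ s → μ[f|m] ω ≤ μ[g|m] ω := by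
  have hle : μ[s.indicator f|m] ≤ᵐ[μ] μ[s.indicator g|m] :=
    condExp_mono (hf.indicator (hm s hs)) (hg.indicator (hm s hs)) (.of_forall fun ω => by
      by_cases hω : ω ∈ s <;> simp [hω, hfg])
  filter_upwards [hle, condExp_indicator hf hs, condExp_indicator hg hs] with ω h hf' hg' hω
  simpa [hf', hg', Set.indicator_of_mem hω] using h

lemma ae_le_condExp_indicator_of_tail [IsFiniteMeasure μ] (hm : m ≤ m0) {Y D : Ω → ℝ}
    (hY : Measurable[m] Y) (hD : Measurable D) {E : Set Ω} (hE : MeasurableSet E) {x₀ : ℝ}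
    (hYDE : ∀ x, x₀ ≤ x → ∀ ω, Y ω < x → x ≤ D ω → ω ∈ E) {φ : ℝ → ℝ}
    (hφ : AntitoneOn φ (Set.Ici x₀))
    (htail : ∀ x, x₀ ≤ x → ∀ᵐ ω ∂μ,
      φ x ≤ μ[{ω | x ≤ D ω}.indicator (fun _ => (1 : ℝ))|m] ω) :
    ∀ᵐ ω ∂μ, x₀ ≤ Y ω → φ (Y ω + 1) ≤ μ[E.indicator (fun _ => (1 : ℝ))|m] ω := by
  -- the tail bound holds a.e. only for countably many levels at once: use rational levels
  -- `q ∈ (Y ω, Y ω + 1)`, on `{Y < q}` of which `{q ≤ D} ⊆ E`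
  have hrat : ∀ q : ℚ, ∀ᵐ ω ∂μ, x₀ ≤ (q : ℝ) → Y ω < q →
      φ q ≤ μ[E.indicator (fun _ => (1 : ℝ))|m] ω := by
    intro q
    by_cases hq : x₀ ≤ (q : ℝ)
    · have hmono := ae_condExp_le_condExp_of_le_on hm (hY measurableSet_Iio)
        ((integrable_const (μ := μ) (1 : ℝ)).indicator
          (measurableSet_le measurable_const hD : MeasurableSet {ω | (q : ℝ) ≤ D ω}))
        ((integrable_const (μ := μ) (1 : ℝ)).indicator hE) fun ω (hω : Y ω < q) => by
          by_cases hqD : (q : ℝ) ≤ D ω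
          · simp [Set.indicator_of_mem (hYDE q hq ω hω hqD),
              Set.indicator_of_mem (show ω ∈ {ω | (q : ℝ) ≤ D ω} from hqD)]
          · simp [hqD, Set.indicator_nonneg]
      filter_upwards [htail q hq, hmono] with ω h₁ h₂ _ hω using h₁.trans (h₂ hω)
    · exact .of_forall fun ω h => absurd h hq
  filter_upwards [ae_all_iff.2 hrat] with ω h hYω
  obtain ⟨q, hYq, hqY⟩ := exists_rat_btwn (lt_add_one (Y ω))
  have hxq : x₀ ≤ (q : ℝ) := hYω.trans hYq.le
  exact (hφ hxq (show x₀ ≤ Y ω + 1 by linarith) hqY.le).trans (h q hxq hYq)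

lemma ae_condExp_tailWeight_sub_ge [IsFiniteMeasure μ] (hm : m ≤ m0) {X₀ X₁ : Ω → ℝ}
    (hX₀ : Measurable[m] X₀) (hX₁ : Measurable X₁) {p δ : ℝ} (hp0 : 0 < p) (hp1 : p ≤ 1)
    (hδ : 0 ≤ δ) (z : ℝ) (hint : Integrable (fun ω => (max (X₁ ω - X₀ ω) 0) ^ p) μ) :
    ∀ᵐ ω ∂μ, z < X₀ ω →
      (1 - (1 + X₀ ω - z) ^ (-δ)) * μ[{ω | X₁ ω ≤ z}.indicator (fun _ => (1 : ℝ))|m] ω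
          - δ ^ p * (1 + X₀ ω - z) ^ (-(δ + p))
            * μ[fun ω => (max (X₁ ω - X₀ ω) 0) ^ p|m] ω
        ≤ μ[fun ω => tailWeight z δ (X₁ ω) - tailWeight z δ (X₀ ω)|m] ω := by
  -- clamping the base at 1 makes the coefficients bounded without changing them where `z < X₀`
  set κ : Ω → ℝ := fun ω => max (1 + X₀ ω - z) 1
  have hκ : Measurable[m] κ := by fun_prop
  have hκ_rpow : ∀ r : ℝ, r ≤ 0 → ∀ ω, 0 ≤ κ ω ^ r ∧ κ ω ^ r ≤ 1 := fun r hr ω =>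
    ⟨rpow_nonneg (by positivity) _,
      rpow_le_one_of_one_le_of_nonpos (le_max_right _ _) hr⟩
  set b₁ : Ω → ℝ := fun ω => 1 - κ ω ^ (-δ)
  set b₂ : Ω → ℝ := fun ω => δ ^ p * κ ω ^ (-(δ + p))
  have hb₁ : StronglyMeasurable[m] b₁ := by fun_prop
  have hb₂ : StronglyMeasurable[m] b₂ := by fun_prop
  have hb₁_le : ∀ ω, ‖b₁ ω‖ ≤ 1 := fun ω => by
    obtain ⟨h₀, h₁⟩ := hκ_rpow (-δ) (by linarith) ω
    rw [Real.norm_eq_abs, abs_le]; constructor <;> linarith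
  have hb₂_le : ∀ ω, ‖b₂ ω‖ ≤ δ ^ p := fun ω => by
    obtain ⟨h₀, h₁⟩ := hκ_rpow (-(δ + p)) (by linarith) ω
    rw [Real.norm_eq_abs, abs_of_nonneg (by positivity)]
    exact mul_le_of_le_one_right (by positivity) h₁
  set E := {ω | X₁ ω ≤ z}
  have hE : Integrable (E.indicator fun _ => (1 : ℝ)) μ :=
    (integrable_const 1).indicator (measurableSet_le hX₁ measurable_const)
  have hi₁ : Integrable (b₁ * E.indicator fun _ => 1) μ :=
    hE.bdd_mul (hb₁.mono hm).aestronglyMeasurable (.of_forall hb₁_le)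
  have hi₂ : Integrable (b₂ * fun ω => (max (X₁ ω - X₀ ω) 0) ^ p) μ :=
    hint.bdd_mul (hb₂.mono hm).aestronglyMeasurable (.of_forall hb₂_le)
  have hiw : Integrable (fun ω => tailWeight z δ (X₁ ω) - tailWeight z δ (X₀ ω)) μ := by
    have hw := measurable_tailWeight z δ
    refine .of_bound ((hw.comp hX₁).sub (hw.comp (hX₀.mono hm le_rfl))).aestronglyMeasurable 1
      (.of_forall fun ω => ?_)
    rw [Real.norm_eq_abs]
    exact abs_sub_le_of_nonneg_of_le (tailWeight_nonneg _ _ _) (tailWeight_le_one hδ _ _)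
      (tailWeight_nonneg _ _ _) (tailWeight_le_one hδ _ _)
  have hmono := ae_condExp_le_condExp_of_le_on hm (measurableSet_lt measurable_const hX₀)
    (hi₁.sub hi₂) hiw fun ω (hω : z < X₀ ω) => by
      have hκω : κ ω = 1 + X₀ ω - z := max_eq_left (by linarith)
      simpa [b₁, b₂, hκω, Set.indicator_apply, E] using
        sub_le_tailWeight_sub hp0 hp1 hδ hω (X₁ ω)
  have hlin := (condExp_sub hi₁ hi₂ m).trans
    ((condExp_stronglyMeasurable_mul_of_bound hm hb₁ hE 1 (.of_forall hb₁_le)).sub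
      (condExp_stronglyMeasurable_mul_of_bound hm hb₂ hint _ (.of_forall hb₂_le)))
  filter_upwards [hmono, hlin] with ω h₁ h₂ hω
  have hκω : κ ω = 1 + X₀ ω - z := max_eq_left (by linarith)
  have h := h₁ hω
  rw [h₂, Pi.sub_apply, Pi.mul_apply, Pi.mul_apply] at h
  simpa only [b₁, b₂, hκω] using h

end CondExp

/-- Local submartingale condition for
`f_{z,δ}(y) = 1` for `y ≤ z`, `(1+y-z)^{-δ}` for `y > z` (Lemma 5 of the paper). -/
theorem stmt8
    {Ω : Type*} {m0 : MeasurableSpace Ω} {μ : Measure Ω} [IsProbabilityMeasure μ]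
    (F : Filtration ℕ m0) (X : ℕ → Ω → ℝ) (hadapted : Adapted F X)
    (α β c C x₀ : ℝ) (hα : α ∈ Set.Ioo (0:ℝ) 1) (hβ : α < β) (hc : 0 < c)
    (hposint : ∀ t, Integrable (fun ω => (max (X (t + 1) ω - X t ω) 0) ^ α) μ)
    (hpos : ∀ t, ∀ᵐ ω ∂μ,
      (μ[fun ω' => (max (X (t + 1) ω' - X t ω') 0) ^ α|F t]) ω ≤ C)
    (hneg : ∀ t, ∀ x, x₀ ≤ x → ∀ᵐ ω ∂μ,
      c * x ^ (-β) ≤ (μ[Set.indicator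
        {ω' | x ≤ max (-(X (t + 1) ω' - X t ω')) 0} (fun _ => (1:ℝ))|F t]) ω)
    (δ : ℝ) (hδ : β - α < δ) :
    ∃ A > (0:ℝ), ∀ z : ℝ, ∀ t, ∀ᵐ ω ∂μ, z + A < X t ω →
      0 ≤ (μ[fun ω' =>
          (if X (t + 1) ω' ≤ z then (1:ℝ) else (1 + X (t + 1) ω' - z) ^ (-δ))
          - (if X t ω' ≤ z then (1:ℝ) else (1 + X t ω' - z) ^ (-δ))|F t]) ω := by
  obtain ⟨hα0, hα1⟩ := hα
  have hδ0 : 0 < δ := by linarith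
  obtain ⟨A₀, hA₀⟩ := eventually_atTop.1
    (eventually_mul_rpow_neg_le (δ ^ α * C) hc (show β < δ + α by linarith) hδ0)
  set A := max A₀ (max x₀ 1)
  have hA₀A : A₀ ≤ A := le_max_left _ _
  have hx₀A : max x₀ 1 ≤ A := le_max_right _ _
  have hx₀1 : (1 : ℝ) ≤ max x₀ 1 := le_max_right _ _
  refine ⟨A, by linarith, fun z t => ?_⟩
  have hXt : Measurable[F t] (X t) := hadapted t
  have hXt1 : Measurable (X (t + 1)) := (hadapted (t + 1)).mono (F.le _) le_rfl
  have hprob := ae_le_condExp_indicator_of_tail (F.le t) (hXt.sub_const z)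
    (D := fun ω => max (-(X (t + 1) ω - X t ω)) 0)
    ((hXt1.sub (hXt.mono (F.le t) le_rfl)).neg.max measurable_const)
    (measurableSet_le hXt1 measurable_const)
    (fun x hx ω hYx hxD => show X (t + 1) ω ≤ z by
      linarith [(le_max_iff.1 hxD).resolve_right (by linarith)])
    (fun x hx y _ hxy => mul_le_mul_of_nonneg_left
      (rpow_le_rpow_of_nonpos (by linarith [Set.mem_Ici.1 hx]) hxy (by linarith)) hc.le)
    (fun x hx => hneg t x ((le_max_left _ _).trans hx))
  have hdrift := ae_condExp_tailWeight_sub_ge (F.le t) hXt hXt1 hα0 hα1.le hδ0.le z (hposint t)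
  filter_upwards [hprob, hdrift, hpos t] with ω hP hD hM hω
  set a := 1 + X t ω - z
  have ha : 1 ≤ a := by linarith
  have hb₁ : 0 ≤ 1 - a ^ (-δ) := sub_nonneg.2 (rpow_le_one_of_one_le_of_nonpos ha (by linarith))
  have hb₂ : 0 ≤ δ ^ α * a ^ (-(δ + α)) := by positivity
  have hPa : c * a ^ (-β) ≤ _ := (show X t ω - z + 1 = a by ring) ▸ hP (by linarith)
  refine le_trans ?_ (hD (by linarith))
  linarith [hA₀ a (by linarith), mul_le_mul_of_nonneg_left hPa hb₁,
    mul_le_mul_of_nonneg_left hM hb₂]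
end

section
/- Let (X_t)_{t∈ℤ⁺} be adapted to (F_t), X_0 = 0, with increments Δ_t. Fix α ∈ (0,1), β > α, and suppose there exist C < ∞, c > 0, x₀ < ∞ such that E[(Δ_t⁻)^β | F_t] ≤ C a.s. for all t, and P[Δ_t⁺ > x | F_t] ≥ c x^{−α} a.s. for all x ≥ x₀ and all t. Then for any ε > 0, almost surely, X_t ≥ t^{1/α} (log t)^{−(1/α)−ε} for all but finitely many t ∈ ℤ⁺. -/
open MeasureTheory Filter Finset Topology

/-!
Cut time into dyadic blocks. In the block `[2^k, 2^(k+1))` there are `2^k` chances, each of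
conditional probability at least `c h_k^(-α)`, for an increment larger than
`h_k = (2^k / k)^(1/α)`, so they all fail with probability at most `exp (-c k)`. With
`p = min β 1` and `1/p < a < 1/α`, subadditivity of `x ↦ x^p` and Markov's inequality bound the
probability that the negative parts accumulated up to time `2^k` exceed `2^(a k)` by
`(1 + C) 2^((1 - a p) k)`. Both bounds are summable, so by Borel–Cantelli, eventually every block
contains a big jump while the accumulated negative parts stay below `2^(a k) = o(h_k)`. For `t` in
`[2^(k+1), 2^(k+2))` this gives `X_t ≥ h_k - 2^(a (k+2))`, which beats
`t^(1/α) (log t)^(-1/α-ε)` by a factor of order `k^ε`.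
-/

theorem Real.rpow_sum_le_sum_rpow {ι : Type*} (s : Finset ι) {f : ι → ℝ}
    (hf : ∀ i ∈ s, 0 ≤ f i) {p : ℝ} (hp0 : 0 < p) (hp1 : p ≤ 1) :
    (∑ i ∈ s, f i) ^ p ≤ ∑ i ∈ s, f i ^ p := by
  induction s using Finset.cons_induction with
  | empty => simp [Real.zero_rpow hp0.ne']
  | cons a s ha ih =>
    rw [forall_mem_cons] at hf
    rw [sum_cons, sum_cons]
    calc (f a + ∑ i ∈ s, f i) ^ p ≤ f a ^ p + (∑ i ∈ s, f i) ^ p :=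
          Real.rpow_add_le_add_rpow hf.1 (sum_nonneg hf.2) hp0.le hp1
      _ ≤ f a ^ p + ∑ i ∈ s, f i ^ p := by gcongr; exact ih hf.2

theorem Real.rpow_le_one_add_rpow {x p q : ℝ} (hx : 0 ≤ x) (hp : 0 ≤ p) (hpq : p ≤ q) :
    x ^ p ≤ 1 + x ^ q := by
  rcases le_total x 1 with hx1 | hx1
  · linarith [Real.rpow_le_one hx hx1 hp, Real.rpow_nonneg hx q]
  · linarith [Real.rpow_le_rpow_of_exponent_le hx1 hpq]

theorem integral_le_of_condExp_le {Ω : Type*} {m m0 : MeasurableSpace Ω} {μ : Measure Ω}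
    [IsProbabilityMeasure μ] (hm : m ≤ m0) {f : Ω → ℝ} {C : ℝ}
    (hf : μ[f|m] ≤ᵐ[μ] fun _ => C) : ∫ ω, f ω ∂μ ≤ C := by
  calc ∫ ω, f ω ∂μ = ∫ ω, (μ[f|m]) ω ∂μ := (integral_condExp hm).symm
    _ ≤ ∫ _, C ∂μ := integral_mono_ae integrable_condExp (integrable_const C) hf
    _ = C := by simp

theorem measureReal_le_sum_le_mul_div_rpow {Ω : Type*} {m0 : MeasurableSpace Ω} {μ : Measure Ω}
    [IsFiniteMeasure μ] {Y : ℕ → Ω → ℝ} (hY : ∀ s ω, 0 ≤ Y s ω) {p M : ℝ} (hp0 : 0 < p)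
    (hp1 : p ≤ 1) (hint : ∀ s, Integrable (fun ω => Y s ω ^ p) μ)
    (hM : ∀ s, ∫ ω, Y s ω ^ p ∂μ ≤ M) (n : ℕ) {l : ℝ} (hl : 0 < l) :
    μ.real {ω | l ≤ ∑ s ∈ range n, Y s ω} ≤ n * M / l ^ p := by
  have hsub : {ω | l ≤ ∑ s ∈ range n, Y s ω} ⊆ {ω | l ^ p ≤ ∑ s ∈ range n, Y s ω ^ p} :=
    fun ω hω => (Real.rpow_le_rpow hl.le hω hp0.le).trans
      (Real.rpow_sum_le_sum_rpow _ (fun s _ => hY s ω) hp0 hp1)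
  have hmarkov := mul_meas_ge_le_integral_of_nonneg
    (Eventually.of_forall fun ω =>
      sum_nonneg fun s (_ : s ∈ range n) => Real.rpow_nonneg (hY s ω) p)
    (integrable_finsetSum (range n) fun s _ => hint s) (l ^ p)
  rw [integral_finsetSum _ fun s _ => hint s] at hmarkov
  rw [le_div_iff₀' (by positivity)]
  calc l ^ p * μ.real {ω | l ≤ ∑ s ∈ range n, Y s ω}
      ≤ l ^ p * μ.real {ω | l ^ p ≤ ∑ s ∈ range n, Y s ω ^ p} :=
        mul_le_mul_of_nonneg_left (measureReal_mono hsub) (by positivity)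
    _ ≤ ∑ s ∈ range n, ∫ ω, Y s ω ^ p ∂μ := hmarkov
    _ ≤ n * M := by simpa using sum_le_sum fun s (_ : s ∈ range n) => hM s

theorem measureReal_biInter_compl_le_exp_neg_pow {Ω : Type*} {m0 : MeasurableSpace Ω}
    {μ : Measure Ω} [IsProbabilityMeasure μ] {F : Filtration ℕ m0} {G : ℕ → Set Ω}
    (hG : ∀ s, MeasurableSet[F (s + 1)] (G s)) {q : ℝ}
    (hq : ∀ s, ∀ᵐ ω ∂μ, q ≤ (μ[(G s).indicator (fun _ => (1:ℝ))|F s]) ω) (a n : ℕ) :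
    μ.real (⋂ s ∈ range n, (G (a + s))ᶜ) ≤ Real.exp (-q) ^ n := by
  induction n with
  | zero => simp
  | succ n ih =>
    set B := ⋂ s ∈ range n, (G (a + s))ᶜ
    have hB : MeasurableSet[F (a + n)] B :=
      .biInter (Finset.countable_toSet _) fun s hs =>
        (F.mono (by rw [coe_range, Set.mem_Iio] at hs; omega) _ (hG (a + s))).compl
    have hGm : MeasurableSet (G (a + n)) := F.le _ _ (hG (a + n))
    have hhit : q * μ.real B ≤ μ.real (B ∩ G (a + n)) := by
      calc q * μ.real B = ∫ _ in B, q ∂μ := by simp [mul_comm]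
        _ ≤ ∫ ω in B, (μ[(G (a + n)).indicator (fun _ => (1:ℝ))|F (a + n)]) ω ∂μ :=
          setIntegral_mono_ae (integrable_const q).integrableOn integrable_condExp.integrableOn
            (hq (a + n))
        _ = ∫ ω in B, (G (a + n)).indicator (fun _ => (1:ℝ)) ω ∂μ :=
          setIntegral_condExp (F.le _) ((integrable_const 1).indicator hGm) hB
        _ = μ.real (B ∩ G (a + n)) := by
          rw [setIntegral_indicator hGm]; simp
    have hsplit := measureReal_sdiff_add_inter (μ := μ) (s := B) hGm
    calc μ.real (⋂ s ∈ range (n + 1), (G (a + s))ᶜ) = μ.real (B \ G (a + n)) := by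
          rw [range_add_one, set_biInter_insert, Set.sdiff_eq, Set.inter_comm]
      _ ≤ (1 - q) * μ.real B := by linarith
      _ ≤ Real.exp (-q) * μ.real B := by
          gcongr; linarith [Real.add_one_le_exp (-q)]
      _ ≤ Real.exp (-q) ^ (n + 1) := by
          rw [pow_succ']; gcongr

theorem ae_eventually_notMem_of_summable {α : Type*} {m : MeasurableSpace α} {μ : Measure α}
    [IsFiniteMeasure μ] {E : ℕ → Set α} {g : ℕ → ℝ} (hg : Summable g)
    (hE : ∀ᶠ k in atTop, μ.real (E k) ≤ g k) : ∀ᵐ x ∂μ, ∀ᶠ k in atTop, x ∉ E k := by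
  obtain ⟨K, hK⟩ := eventually_atTop.1 hE
  have hsum : ∑' k, μ (E (k + K)) ≠ ⊤ := by
    refine ne_top_of_le_ne_top (ENNReal.ofReal_ne_top (r := ∑' k, g (k + K))) ?_
    rw [ENNReal.ofReal_tsum_of_nonneg (fun k => measureReal_nonneg.trans (hK _ le_add_self))
      ((summable_nat_add_iff K).2 hg)]
    refine ENNReal.tsum_le_tsum fun k => ?_
    rw [← ofReal_measureReal]
    exact ENNReal.ofReal_le_ofReal (hK _ le_add_self)
  filter_upwards [ae_eventually_notMem hsum] with x hx
  filter_upwards [(tendsto_sub_atTop_nat K).eventually hx, eventually_ge_atTop K] with k hk hkK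
  rwa [Nat.sub_add_cancel hkK] at hk

theorem eventually_atTop_of_dyadic_blocks {P : ℕ → Prop}
    (h : ∀ᶠ k in atTop, ∀ t, 2 ^ (k + 1) ≤ t → t < 2 ^ (k + 2) → P t) :
    ∀ᶠ t in atTop, P t := by
  obtain ⟨K, hK⟩ := eventually_atTop.1 h
  refine eventually_atTop.2 ⟨2 ^ (K + 1), fun t ht => ?_⟩
  have ht0 : t ≠ 0 := (Nat.pos_of_ne_zero (by positivity)).trans_le ht |>.ne'
  have hlog : K + 1 ≤ Nat.log 2 t := Nat.le_log_of_pow_le one_lt_two ht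
  refine hK (Nat.log 2 t - 1) (by omega) t ?_ ?_
  · rw [Nat.sub_add_cancel (by omega)]; exact Nat.pow_log_le_self 2 ht0
  · rw [show Nat.log 2 t - 1 + 2 = Nat.log 2 t + 1 by omega]
    exact Nat.lt_pow_succ_log_self one_lt_two t

theorem posPart_sub_sum_negPart_le {x : ℕ → ℝ} (hx0 : x 0 = 0) {s t : ℕ} (hst : s < t) :
    max (x (s + 1) - x s) 0 - ∑ u ∈ range t, max (-(x (u + 1) - x u)) 0 ≤ x t := by
  have htel : x t = ∑ u ∈ range t, (max (x (u + 1) - x u) 0 - max (-(x (u + 1) - x u)) 0) := by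
    simp only [max_zero_sub_max_neg_zero_eq_self, sum_range_sub, hx0, sub_zero]
  rw [htel, sum_sub_distrib]
  gcongr
  exact single_le_sum (fun u _ => le_max_right (x (u + 1) - x u) 0) (mem_range.2 hst)

noncomputable def jumpLevel (α : ℝ) (k : ℕ) : ℝ := ((2 : ℝ) ^ k / k) ^ (1 / α)

theorem two_pow_mul_jumpLevel_rpow_neg {α : ℝ} (hα : α ≠ 0) (k : ℕ) :
    (2 : ℝ) ^ k * jumpLevel α k ^ (-α) = k := by
  rw [jumpLevel, ← Real.rpow_mul (by positivity), one_div_mul_eq_div, neg_div_self hα,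
    Real.rpow_neg_one, inv_div, mul_div_cancel₀ _ (by positivity)]

theorem tendsto_jumpLevel {α : ℝ} (hα : 0 < α) : Tendsto (jumpLevel α) atTop atTop := by
  have h : Tendsto (fun k : ℕ => (k : ℝ) / 2 ^ k) atTop (𝓝[>] 0) := by
    refine tendsto_nhdsWithin_iff.2
      ⟨by simpa using tendsto_pow_const_div_const_pow_of_one_lt 1 one_lt_two, ?_⟩
    filter_upwards [eventually_ge_atTop 1] with k hk
    exact Set.mem_Ioi.2 (div_pos (Nat.cast_pos.2 hk) (by positivity))
  refine (tendsto_rpow_atTop (by positivity)).comp (h.inv_tendsto_nhdsGT_zero.congr fun k => ?_)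
  simp [inv_div]

theorem tendsto_two_pow_rpow_neg_mul_rpow {b : ℝ} (hb : 0 < b) (s : ℝ) :
    Tendsto (fun k : ℕ => ((2 : ℝ) ^ k) ^ (-b) * (k : ℝ) ^ s) atTop (𝓝 0) := by
  refine ((tendsto_rpow_mul_exp_neg_mul_atTop_nhds_zero s (b * Real.log 2)
    (by positivity)).comp tendsto_natCast_atTop_atTop).congr fun k => ?_
  rw [Function.comp_apply, Real.rpow_def_of_pos (by positivity : (0 : ℝ) < 2 ^ k), Real.log_pow,
    mul_comm]
  ring_nf

theorem rpow_mul_log_rpow_le_mul_jumpLevel {α ε : ℝ} (hα : 0 < α) (hε : 0 < ε) {k t : ℕ}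
    (hk : 1 ≤ k) (ht₁ : 2 ^ (k + 1) ≤ t) (ht₂ : t < 2 ^ (k + 2)) :
    (t : ℝ) ^ (1 / α) * Real.log t ^ (-(1 / α) - ε)
      ≤ 4 ^ (1 / α) * Real.log 2 ^ (-(1 / α) - ε) * (k : ℝ) ^ (-ε) * jumpLevel α k := by
  have hk0 : (0 : ℝ) < k := by exact_mod_cast hk
  have hlog2 := Real.log_pos one_lt_two
  have hpow : (t : ℝ) ^ (1 / α) ≤ 4 ^ (1 / α) * ((2 : ℝ) ^ k) ^ (1 / α) := by
    rw [← Real.mul_rpow (by norm_num) (by positivity)]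
    gcongr
    calc (t : ℝ) ≤ (2 ^ (k + 2) : ℕ) := by exact_mod_cast ht₂.le
      _ = 4 * 2 ^ k := by push_cast; ring
  have hlog : k * Real.log 2 ≤ Real.log t := by
    calc k * Real.log 2 ≤ (k + 1 : ℕ) * Real.log 2 := by gcongr; linarith
      _ = Real.log (2 ^ (k + 1) : ℕ) := by rw [Nat.cast_pow, Nat.cast_ofNat, Real.log_pow]
      _ ≤ Real.log t := Real.log_le_log (by positivity) (by exact_mod_cast ht₁)
  have hlogpow : Real.log t ^ (-(1 / α) - ε)
      ≤ Real.log 2 ^ (-(1 / α) - ε) * ((k : ℝ) ^ (-ε) / (k : ℝ) ^ (1 / α)) := by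
    calc Real.log t ^ (-(1 / α) - ε) ≤ (k * Real.log 2) ^ (-(1 / α) - ε) :=
          Real.rpow_le_rpow_of_nonpos (by positivity) hlog (by linarith [one_div_pos.2 hα])
      _ = _ := by
          rw [Real.mul_rpow hk0.le hlog2.le, mul_comm, sub_eq_neg_add, Real.rpow_add hk0,
            Real.rpow_neg hk0.le (1 / α)]
          ring
  calc (t : ℝ) ^ (1 / α) * Real.log t ^ (-(1 / α) - ε)
      ≤ (4 ^ (1 / α) * ((2 : ℝ) ^ k) ^ (1 / α)) *
          (Real.log 2 ^ (-(1 / α) - ε) * ((k : ℝ) ^ (-ε) / (k : ℝ) ^ (1 / α))) :=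
        mul_le_mul hpow hlogpow (by positivity) (by positivity)
    _ = _ := by rw [jumpLevel, Real.div_rpow (by positivity) hk0.le]; ring

theorem two_pow_add_two_rpow_eq_mul_jumpLevel {α : ℝ} (a : ℝ) {k : ℕ} (hk : 1 ≤ k) :
    ((2 : ℝ) ^ (k + 2)) ^ a
      = 4 ^ a * (((2 : ℝ) ^ k) ^ (a - 1 / α) * (k : ℝ) ^ (1 / α)) * jumpLevel α k := by
  have hk0 : (0 : ℝ) < k := by exact_mod_cast hk
  rw [jumpLevel, Real.div_rpow (by positivity) hk0.le, pow_add, mul_comm,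
    Real.mul_rpow (by positivity) (by positivity), Real.rpow_sub (by positivity)]
  field_simp
  norm_num

theorem eventually_rpow_mul_log_rpow_add_le_jumpLevel {α ε a : ℝ} (hα : 0 < α) (hε : 0 < ε)
    (ha : a < 1 / α) :
    ∀ᶠ k : ℕ in atTop, ∀ t : ℕ, 2 ^ (k + 1) ≤ t → t < 2 ^ (k + 2) →
      (t : ℝ) ^ (1 / α) * Real.log t ^ (-(1 / α) - ε) + ((2 : ℝ) ^ (k + 2)) ^ a
        ≤ jumpLevel α k := by
  set B : ℝ := 4 ^ (1 / α) * Real.log 2 ^ (-(1 / α) - ε)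
  have hlog : Tendsto (fun k : ℕ => B * (k : ℝ) ^ (-ε)) atTop (𝓝 0) := by
    simpa using ((tendsto_rpow_neg_atTop hε).comp tendsto_natCast_atTop_atTop).const_mul B
  have hgeom : Tendsto
      (fun k : ℕ => (4 : ℝ) ^ a * (((2 : ℝ) ^ k) ^ (a - 1 / α) * (k : ℝ) ^ (1 / α)))
      atTop (𝓝 0) := by
    simpa using (tendsto_two_pow_rpow_neg_mul_rpow (sub_pos.2 ha) (1 / α)).const_mul ((4 : ℝ) ^ a)
  filter_upwards [hlog.eventually (ge_mem_nhds one_half_pos),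
    hgeom.eventually (ge_mem_nhds one_half_pos), eventually_ge_atTop 1] with k hk₁ hk₂ hk t ht₁ ht₂
  have hJ : 0 ≤ jumpLevel α k := by unfold jumpLevel; positivity
  calc (t : ℝ) ^ (1 / α) * Real.log t ^ (-(1 / α) - ε) + ((2 : ℝ) ^ (k + 2)) ^ a
      ≤ B * (k : ℝ) ^ (-ε) * jumpLevel α k
        + 4 ^ a * (((2 : ℝ) ^ k) ^ (a - 1 / α) * (k : ℝ) ^ (1 / α)) * jumpLevel α k :=
        add_le_add (rpow_mul_log_rpow_le_mul_jumpLevel hα hε hk ht₁ ht₂)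
          (two_pow_add_two_rpow_eq_mul_jumpLevel a hk).le
    _ ≤ 1 / 2 * jumpLevel α k + 1 / 2 * jumpLevel α k := by gcongr
    _ = jumpLevel α k := by ring

theorem two_pow_mul_div_rpow_rpow (M a p : ℝ) (j : ℕ) :
    (2 : ℝ) ^ j * M / (((2 : ℝ) ^ j) ^ a) ^ p = M * ((2 : ℝ) ^ (1 - a * p)) ^ j := by
  rw [← Real.rpow_mul (by positivity), ← Real.rpow_pow_comm (by norm_num), Real.rpow_sub two_pos,
    Real.rpow_one, div_pow, mul_div_assoc', mul_comm]

section Increments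

variable {Ω : Type*} {m0 : MeasurableSpace Ω} {μ : Measure Ω} [IsProbabilityMeasure μ]
  {F : Filtration ℕ m0} {X : ℕ → Ω → ℝ}

def posIncr (X : ℕ → Ω → ℝ) (t : ℕ) (ω : Ω) : ℝ := max (X (t + 1) ω - X t ω) 0

def negIncr (X : ℕ → Ω → ℝ) (t : ℕ) (ω : Ω) : ℝ := max (-(X (t + 1) ω - X t ω)) 0

theorem negIncr_nonneg (X : ℕ → Ω → ℝ) (t : ℕ) (ω : Ω) : 0 ≤ negIncr X t ω := le_max_right _ _

theorem measurable_posIncr (hX : Adapted F X) (t : ℕ) : Measurable[F (t + 1)] (posIncr X t) :=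
  ((hX (t + 1)).sub ((hX t).mono (F.mono t.le_succ) le_rfl)).max measurable_const

theorem measurable_negIncr (hX : Adapted F X) (t : ℕ) : Measurable (negIncr X t) :=
  (((hX (t + 1)).sub ((hX t).mono (F.mono t.le_succ) le_rfl)).neg.max measurable_const).mono
    (F.le _) le_rfl

theorem measureReal_le_sum_negIncr_le_mul_div_rpow (hX : Adapted F X) {β C p : ℝ} (hp0 : 0 < p)
    (hp1 : p ≤ 1) (hpβ : p ≤ β) (hint : ∀ t, Integrable (fun ω => negIncr X t ω ^ β) μ)
    (hC : ∀ t, μ[fun ω => negIncr X t ω ^ β|F t] ≤ᵐ[μ] fun _ => C) (n : ℕ) {l : ℝ}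
    (hl : 0 < l) :
    μ.real {ω | l ≤ ∑ s ∈ range n, negIncr X s ω} ≤ n * (1 + C) / l ^ p := by
  have hbound (t : ℕ) (ω : Ω) : negIncr X t ω ^ p ≤ 1 + negIncr X t ω ^ β :=
    Real.rpow_le_one_add_rpow (negIncr_nonneg X t ω) hp0.le hpβ
  have hint' (t : ℕ) : Integrable (fun ω => 1 + negIncr X t ω ^ β) μ :=
    (integrable_const 1).add (hint t)
  have hint_p (t : ℕ) : Integrable (fun ω => negIncr X t ω ^ p) μ :=
    (hint' t).mono' ((measurable_negIncr hX t).pow_const p).aestronglyMeasurable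
      (Eventually.of_forall fun ω => by
        rw [Real.norm_of_nonneg (Real.rpow_nonneg (negIncr_nonneg X t ω) p)]; exact hbound t ω)
  refine measureReal_le_sum_le_mul_div_rpow (negIncr_nonneg X) hp0 hp1 hint_p (fun t => ?_) n hl
  calc ∫ ω, negIncr X t ω ^ p ∂μ ≤ ∫ ω, (1 + negIncr X t ω ^ β) ∂μ :=
        integral_mono (hint_p t) (hint' t) (hbound t)
    _ = 1 + ∫ ω, negIncr X t ω ^ β ∂μ := by rw [integral_add (integrable_const 1) (hint t)]; simp
    _ ≤ 1 + C := by gcongr; exact integral_le_of_condExp_le (F.le t) (hC t)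

theorem measureReal_biInter_posIncr_le_le_exp_neg_pow (hX : Adapted F X) {q x : ℝ}
    (hq : ∀ t, ∀ᵐ ω ∂μ,
      q ≤ (μ[{ω' | x < posIncr X t ω'}.indicator (fun _ => (1 : ℝ))|F t]) ω) (a n : ℕ) :
    μ.real (⋂ s ∈ range n, {ω | posIncr X (a + s) ω ≤ x}) ≤ Real.exp (-q) ^ n := by
  simpa only [Set.compl_ofPred, not_lt] using measureReal_biInter_compl_le_exp_neg_pow
    (fun s => measurableSet_lt measurable_const (measurable_posIncr hX s)) hq a n

theorem ae_eventually_posIncr_gt_and_sum_negIncr_lt (hX : Adapted F X) {α β c C x₀ p a : ℝ}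
    (hα : 0 < α) (hc : 0 < c) (hp0 : 0 < p) (hp1 : p ≤ 1) (hpβ : p ≤ β) (hap : 1 < a * p)
    (hint : ∀ t, Integrable (fun ω => negIncr X t ω ^ β) μ)
    (hC : ∀ t, μ[fun ω => negIncr X t ω ^ β|F t] ≤ᵐ[μ] fun _ => C)
    (htail : ∀ t, ∀ x, x₀ ≤ x → ∀ᵐ ω ∂μ,
      c * x ^ (-α) ≤ (μ[{ω' | x < posIncr X t ω'}.indicator (fun _ => (1 : ℝ))|F t]) ω) :
    ∀ᵐ ω ∂μ, ∀ᶠ k in atTop,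
      (∃ s ∈ range (2 ^ k), jumpLevel α k < posIncr X (2 ^ k + s) ω) ∧
        ∑ s ∈ range (2 ^ (k + 2)), negIncr X s ω < ((2 : ℝ) ^ (k + 2)) ^ a := by
  set r : ℝ := 2 ^ (1 - a * p)
  have hr : r < 1 := Real.rpow_lt_one_of_one_lt_of_neg one_lt_two (by linarith)
  have hsum : Summable fun k : ℕ => Real.exp (-c) ^ k + (1 + C) * r ^ (k + 2) :=
    (summable_geometric_of_lt_one (Real.exp_nonneg _)
      (Real.exp_lt_one_iff.2 (neg_neg_of_pos hc))).add
      (((summable_nat_add_iff 2).2 (summable_geometric_of_lt_one (by positivity) hr)).mul_left _)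
  have hbad : ∀ᶠ k in atTop,
      μ.real ((⋂ s ∈ range (2 ^ k), {ω | posIncr X (2 ^ k + s) ω ≤ jumpLevel α k}) ∪
        {ω | ((2 : ℝ) ^ (k + 2)) ^ a ≤ ∑ s ∈ range (2 ^ (k + 2)), negIncr X s ω})
        ≤ Real.exp (-c) ^ k + (1 + C) * r ^ (k + 2) := by
    filter_upwards [(tendsto_jumpLevel hα).eventually_ge_atTop x₀] with k hk
    refine (measureReal_union_le _ _).trans (add_le_add ?_ ?_)
    · refine (measureReal_biInter_posIncr_le_le_exp_neg_pow hX (fun t => htail t _ hk)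
        (2 ^ k) (2 ^ k)).trans_eq ?_
      rw [← Real.exp_nat_mul, ← Real.exp_nat_mul, ← two_pow_mul_jumpLevel_rpow_neg hα.ne' k]
      push_cast
      ring_nf
    · refine (measureReal_le_sum_negIncr_le_mul_div_rpow hX hp0 hp1 hpβ hint hC (2 ^ (k + 2))
        (l := ((2 : ℝ) ^ (k + 2)) ^ a) (by positivity)).trans_eq ?_
      push_cast
      rw [two_pow_mul_div_rpow_rpow]
  filter_upwards [ae_eventually_notMem_of_summable hsum hbad] with ω hω
  filter_upwards [hω] with k hk
  simpa [not_or, not_le] using hk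

end Increments

/-- Almost-sure rate of escape (Theorem 3 of the paper): under a `β`-moment bound
on the negative parts and a conditional lower tail bound
`P[Δ_t⁺ > x|F_t] ≥ c x^{-α}`, a.s. for all but finitely many `t`,
`X_t ≥ t^{1/α} (log t)^{-(1/α)-ε}`. -/
theorem stmt11
    {Ω : Type*} {m0 : MeasurableSpace Ω} {μ : Measure Ω} [IsProbabilityMeasure μ]
    (F : Filtration ℕ m0) (X : ℕ → Ω → ℝ) (hadapted : Adapted F X)
    (hX0 : ∀ ω, X 0 ω = 0)
    (α β c C x₀ : ℝ) (hα : α ∈ Set.Ioo (0:ℝ) 1) (hβ : α < β) (hc : 0 < c)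
    (hnegint : ∀ t, Integrable (fun ω => (max (-(X (t + 1) ω - X t ω)) 0) ^ β) μ)
    (hneg : ∀ t, ∀ᵐ ω ∂μ,
      (μ[fun ω' => (max (-(X (t + 1) ω' - X t ω')) 0) ^ β|F t]) ω ≤ C)
    (htail : ∀ t, ∀ x, x₀ ≤ x → ∀ᵐ ω ∂μ,
      c * x ^ (-α) ≤ (μ[Set.indicator {ω' | x < max (X (t + 1) ω' - X t ω') 0}
        (fun _ => (1:ℝ))|F t]) ω)
    (ε : ℝ) (hε : 0 < ε) :
    ∀ᵐ ω ∂μ, ∀ᶠ t : ℕ in atTop,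
      (t:ℝ) ^ (1/α) * (Real.log t) ^ (-(1/α) - ε) ≤ X t ω := by
  obtain ⟨hα0, hα1⟩ := hα
  have hαp : α < min β 1 := lt_min hβ hα1
  have hp0 : 0 < min β 1 := hα0.trans hαp
  obtain ⟨a, hpa, haα⟩ := exists_between (one_div_lt_one_div_of_lt hα0 hαp)
  filter_upwards [ae_eventually_posIncr_gt_and_sum_negIncr_lt hadapted hα0 hc hp0
    (min_le_right _ _) (min_le_left _ _) ((div_lt_iff₀ hp0).1 hpa) hnegint hneg htail]
    with ω hω
  refine eventually_atTop_of_dyadic_blocks ?_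
  filter_upwards [hω, eventually_rpow_mul_log_rpow_add_le_jumpLevel hα0 hε haα]
    with k ⟨⟨s, hs, hjump⟩, hsmall⟩ hdet t ht₁ ht₂
  have hst : 2 ^ k + s < t := by
    have := mem_range.1 hs
    rw [pow_succ] at ht₁
    omega
  have hneg_mono : ∑ u ∈ range t, negIncr X u ω ≤ ∑ u ∈ range (2 ^ (k + 2)), negIncr X u ω :=
    sum_le_sum_of_subset_of_nonneg (range_subset_range.2 ht₂.le)
      fun u _ _ => negIncr_nonneg X u ω
  calc (t : ℝ) ^ (1 / α) * Real.log t ^ (-(1 / α) - ε)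
      ≤ posIncr X (2 ^ k + s) ω - ∑ u ∈ range t, negIncr X u ω := by
        linarith [hdet t ht₁ ht₂]
    _ ≤ X t ω := posPart_sub_sum_negPart_le (x := (X · ω)) (hX0 ω) hst
end

section
/- Let (X_t)_{t∈ℤ⁺} be adapted to (F_t), X_0 = 0, with increments Δ_t. Suppose there exist γ ∈ (0,1), c > 0, x₀ < ∞ such that E[Δ_t⁺ 1{Δ_t⁺ ≤ x} | F_t] ≥ c x^{1−γ} a.s. for all x ≥ x₀ and all t. Then limsup_{t→∞} |X_t| = ∞ almost surely. -/
/-!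
As `γ < 1` we may choose `x` so large that `c x^{1-γ} > 2n`. Since
`Δ⁺ 1{Δ⁺ ≤ x} ≤ 2n + x 1{Δ⁺ > 2n}`, the hypothesis gives
`P[Δ_t > 2n | F_t] ≥ (c x^{1-γ} - 2n) / x > 0` uniformly in `t`, so by Lévy's extension of the
Borel–Cantelli lemma `Δ_t > 2n` infinitely often a.s. Each such jump starts from `|X_t| ≥ n` or
ends at `X_{t+1} ≥ n`.
-/

open MeasureTheory Filter

lemma Set.indicator_le_add_mul_indicator_lt {Ω : Type*} (D : Ω → ℝ) {x y : ℝ} (hx : 0 ≤ x)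
    (hy : 0 ≤ y) (ω : Ω) :
    {ω | D ω ≤ x}.indicator D ω ≤ y + x * {ω | y < D ω}.indicator (1 : Ω → ℝ) ω := by
  by_cases hDx : D ω ≤ x <;> by_cases hyD : y < D ω <;>
    simp only [Set.indicator, Set.mem_ofPred_eq, hDx, hyD, if_true, if_false, Pi.one_apply] <;>
    nlinarith

lemma frequently_le_abs_of_frequently_lt_sub {u : ℕ → ℝ} {M : ℝ}
    (h : ∃ᶠ k in atTop, 2 * M < u (k + 1) - u k) : ∃ᶠ k in atTop, M ≤ |u k| := by
  rw [frequently_atTop] at h ⊢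
  intro a
  obtain ⟨k, hka, hk⟩ := h a
  by_cases hMk : M ≤ |u k|
  · exact ⟨k, hka, hMk⟩
  · have := (abs_lt.1 (not_le.1 hMk)).1
    exact ⟨k + 1, hka.trans k.le_succ, by linarith [le_abs_self (u (k + 1))]⟩

namespace MeasureTheory

variable {Ω : Type*} {m m0 : MeasurableSpace Ω} {μ : Measure Ω} [IsFiniteMeasure μ]

lemma div_le_condExp_indicator_lt (hm : m ≤ m0) {D : Ω → ℝ} (hD : Measurable D)
    (hD0 : ∀ ω, 0 ≤ D ω) {a x y : ℝ} (hx : 0 < x) (hy : 0 ≤ y)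
    (h : ∀ᵐ ω ∂μ, a ≤ μ[{ω | D ω ≤ x}.indicator D | m] ω) :
    ∀ᵐ ω ∂μ, (a - y) / x ≤ μ[{ω | y < D ω}.indicator (1 : Ω → ℝ) | m] ω := by
  set I := {ω | y < D ω}.indicator (1 : Ω → ℝ)
  have hI : Integrable I μ :=
    (integrable_const 1).indicator (measurableSet_lt measurable_const hD)
  have htrunc : Integrable ({ω | D ω ≤ x}.indicator D) μ := by
    refine Integrable.mono' (integrable_const x)
      (hD.indicator (measurableSet_le hD measurable_const)).aestronglyMeasurable
      (Eventually.of_forall fun ω => ?_)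
    by_cases hDx : D ω ≤ x
    · simp only [Set.indicator, Set.mem_ofPred_eq, hDx, if_true, Real.norm_eq_abs]
      exact abs_le.2 ⟨by linarith [hD0 ω, hx], hDx⟩
    · simp [Set.indicator, hDx, hx.le]
  have hmono := condExp_mono (m := m) htrunc ((integrable_const y).add (hI.smul x))
    (Eventually.of_forall (Set.indicator_le_add_mul_indicator_lt D hx.le hy))
  filter_upwards [h, hmono, condExp_add (integrable_const y) (hI.smul x) m,
    condExp_smul x I m] with ω ha hle hadd hsmul
  rw [condExp_const hm] at hadd
  simp only [Pi.add_apply, hsmul, Pi.smul_apply, smul_eq_mul] at hadd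
  rw [div_le_iff₀ hx]
  linarith

lemma ae_frequently_mem_of_le_condExp_indicator (ℱ : Filtration ℕ m0) {s : ℕ → Set Ω}
    (hs : ∀ n, MeasurableSet[ℱ (n + 1)] (s n)) {δ : ℝ} (hδ : 0 < δ)
    (h : ∀ n, ∀ᵐ ω ∂μ, δ ≤ μ[(s n).indicator (1 : Ω → ℝ) | ℱ n] ω) :
    ∀ᵐ ω ∂μ, ∃ᶠ n in atTop, ω ∈ s n := by
  -- `s` is adapted to the filtration shifted by one, to which Lévy's Borel–Cantelli lemma applies.
  let ℱ' : Filtration ℕ m0 :=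
    ⟨fun n => ℱ (n + 1), fun _ _ hij => ℱ.mono (Nat.succ_le_succ hij), fun n => ℱ.le (n + 1)⟩
  filter_upwards [ae_all_iff.2 h, ae_mem_limsup_atTop_iff (ℱ := ℱ') μ hs] with ω hδle hlimsup
  refine mem_limsup_iff_frequently_mem.1 (hlimsup.2 (tendsto_atTop_mono (fun n => ?_)
    (tendsto_natCast_atTop_atTop.atTop_mul_const hδ)))
  calc (n : ℝ) * δ = ∑ _k ∈ Finset.range n, δ := by simp
    _ ≤ _ := Finset.sum_le_sum fun k _ => hδle (k + 1)

end MeasureTheory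

theorem stmt19_general
    {Ω : Type*} {m0 : MeasurableSpace Ω} {μ : Measure Ω} [IsProbabilityMeasure μ]
    (F : Filtration ℕ m0) (X : ℕ → Ω → ℝ) (hadapted : Adapted F X)
    (γ c x₀ : ℝ) (hγ : γ ∈ Set.Ioo (0:ℝ) 1) (hc : 0 < c)
    (hpos : ∀ t, ∀ x, x₀ ≤ x → ∀ᵐ ω ∂μ,
      c * x ^ (1 - γ) ≤ (μ[fun ω' =>
        Set.indicator {ω'' | max (X (t + 1) ω'' - X t ω'') 0 ≤ x}
          (fun ω'' => max (X (t + 1) ω'' - X t ω'') 0) ω'|F t]) ω) :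
    ∀ᵐ ω ∂μ, ∀ M : ℝ, ∃ᶠ t : ℕ in atTop, M ≤ |X t ω| := by
  suffices ∀ n : ℕ, ∀ᵐ ω ∂μ, ∃ᶠ t in atTop, (n : ℝ) ≤ |X t ω| by
    filter_upwards [ae_all_iff.2 this] with ω hω M
    exact (hω ⌈M⌉₊).mono fun t ht => (Nat.le_ceil M).trans ht
  intro n
  obtain ⟨x, hcx, hx₀, hx⟩ : ∃ x, 2 * (n : ℝ) < c * x ^ (1 - γ) ∧ x₀ ≤ x ∧ 0 < x :=
    ((((tendsto_rpow_atTop (by linarith [hγ.2])).const_mul_atTop hc).eventually_gt_atTop _).and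
      ((eventually_ge_atTop x₀).and (eventually_gt_atTop 0))).exists
  have hjump : ∀ t, Measurable[F (t + 1)] fun ω => max (X (t + 1) ω - X t ω) 0 := fun t =>
    ((hadapted (t + 1)).sub ((hadapted t).mono (F.mono t.le_succ) le_rfl)).max measurable_const
  have hfreq := ae_frequently_mem_of_le_condExp_indicator F
    (fun t => measurableSet_lt measurable_const (hjump t)) (div_pos (sub_pos.2 hcx) hx)
    fun t => div_le_condExp_indicator_lt (y := 2 * (n : ℝ)) (F.le t)
      ((hjump t).mono (F.le _) le_rfl) (fun ω => le_max_right _ _) hx (by positivity)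
      (hpos t x hx₀)
  filter_upwards [hfreq] with ω hω
  refine frequently_le_abs_of_frequently_lt_sub (hω.mono fun t ht => ?_)
  exact (lt_max_iff.1 ht).resolve_right (by positivity : (0 : ℝ) ≤ 2 * n).not_gt

/-- Proposition 1(ii) of the paper: if the truncated conditional means of the
positive parts of the increments satisfy
`E[Δ_t⁺ 1{Δ_t⁺ ≤ x}|F_t] ≥ c x^{1-γ}` for all large `x`, then
`limsup_{t→∞} |X_t| = ∞` almost surely. -/
theorem stmt19
    {Ω : Type*} {m0 : MeasurableSpace Ω} {μ : Measure Ω} [IsProbabilityMeasure μ]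
    (F : Filtration ℕ m0) (X : ℕ → Ω → ℝ) (hadapted : Adapted F X)
    (hX0 : ∀ ω, X 0 ω = 0)
    (γ c x₀ : ℝ) (hγ : γ ∈ Set.Ioo (0:ℝ) 1) (hc : 0 < c)
    (hpos : ∀ t, ∀ x, x₀ ≤ x → ∀ᵐ ω ∂μ,
      c * x ^ (1 - γ) ≤ (μ[fun ω' =>
        Set.indicator {ω'' | max (X (t + 1) ω'' - X t ω'') 0 ≤ x}
          (fun ω'' => max (X (t + 1) ω'' - X t ω'') 0) ω'|F t]) ω) :
    ∀ᵐ ω ∂μ, ∀ M : ℝ, ∃ᶠ t : ℕ in atTop, M ≤ |X t ω| :=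
  stmt19_general F X hadapted γ c x₀ hγ hc hpos
end
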